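/- Let k ≥ 2 and let C be a left representable k-ary skew multicategory whose category C^t₁ of objects and tight unary maps is cocomplete. Then the k-ary multicategory C^♯ of sharp multimaps admits nullary and binary map classifiers: the nullary map classifier i of C is also a nullary map classifier for C^♯, and for objects a, b a classifier a⋆b of sharp binary maps out of (a,b) is given by the pushout in C^t₁ of the canonical map ε : C^t₁(i,a)·(i⊗b) → a⊗b (whose component at x̄ : i → a is x̄⊗1) along the copower C^t₁(i,a)·l_b of the left unit map l_b : i⊗b → b. -/

import Mathlib

set_option linter.unusedVariables false
set_option autoImplicit false
set_option maxHeartbeats 1000000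

noncomputable section

open CategoryTheory

/-!  # Gray-categories

A Gray-category: it has 0-cells, 1-cells, 2-cells and 3-cells, each hom is a strict
2-category, whiskering by 1-cells on both sides is 2-functorial and compatible with
composition, and there are invertible interchange 3-cells, natural in both variables.
(A handful of the more intricate coherence equations of the full definition,
which play no role in the statements below, are elided.) -/
structure GrayCategory : Type 1 where
  Obj : Type
  Hom : Obj → Obj → Type
  Two : ∀ {x y : Obj}, Hom x y → Hom x y → Type
  Three : ∀ {x y : Obj} {f g : Hom x y}, Two f g → Two f g → Type
  id₁ : ∀ x : Obj, Hom x x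
  comp₁ : ∀ {x y z : Obj}, Hom x y → Hom y z → Hom x z
  id_comp₁ : ∀ {x y : Obj} (f : Hom x y), comp₁ (id₁ x) f = f
  comp₁_id : ∀ {x y : Obj} (f : Hom x y), comp₁ f (id₁ y) = f
  assoc₁ : ∀ {w x y z : Obj} (f : Hom w x) (g : Hom x y) (h : Hom y z),
      comp₁ (comp₁ f g) h = comp₁ f (comp₁ g h)
  id₂ : ∀ {x y : Obj} (f : Hom x y), Two f f
  comp₂ : ∀ {x y : Obj} {f g h : Hom x y}, Two f g → Two g h → Two f h
  id_comp₂ : ∀ {x y : Obj} {f g : Hom x y} (φ : Two f g), comp₂ (id₂ f) φ = φ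
  comp₂_id : ∀ {x y : Obj} {f g : Hom x y} (φ : Two f g), comp₂ φ (id₂ g) = φ
  assoc₂ : ∀ {x y : Obj} {f g h k : Hom x y} (φ : Two f g) (ψ : Two g h) (χ : Two h k),
      comp₂ (comp₂ φ ψ) χ = comp₂ φ (comp₂ ψ χ)
  id₃ : ∀ {x y : Obj} {f g : Hom x y} (φ : Two f g), Three φ φ
  comp₃ : ∀ {x y : Obj} {f g : Hom x y} {φ ψ χ : Two f g}, Three φ ψ → Three ψ χ → Three φ χ
  id_comp₃ : ∀ {x y : Obj} {f g : Hom x y} {φ ψ : Two f g} (Λ : Three φ ψ),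
      comp₃ (id₃ φ) Λ = Λ
  comp₃_id : ∀ {x y : Obj} {f g : Hom x y} {φ ψ : Two f g} (Λ : Three φ ψ),
      comp₃ Λ (id₃ ψ) = Λ
  assoc₃ : ∀ {x y : Obj} {f g : Hom x y} {φ ψ χ ω : Two f g}
      (Λ : Three φ ψ) (Θ : Three ψ χ) (Ξ : Three χ ω),
      comp₃ (comp₃ Λ Θ) Ξ = comp₃ Λ (comp₃ Θ Ξ)
  hcomp₃ : ∀ {x y : Obj} {f g h : Hom x y} {φ φ' : Two f g} {ψ ψ' : Two g h},
      Three φ φ' → Three ψ ψ' → Three (comp₂ φ ψ) (comp₂ φ' ψ')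
  hcomp₃_id : ∀ {x y : Obj} {f g h : Hom x y} (φ : Two f g) (ψ : Two g h),
      hcomp₃ (id₃ φ) (id₃ ψ) = id₃ (comp₂ φ ψ)
  hcomp₃_comp : ∀ {x y : Obj} {f g h : Hom x y} {φ φ' φ'' : Two f g} {ψ ψ' ψ'' : Two g h}
      (Λ : Three φ φ') (Λ' : Three φ' φ'') (Θ : Three ψ ψ') (Θ' : Three ψ' ψ''),
      hcomp₃ (comp₃ Λ Λ') (comp₃ Θ Θ') = comp₃ (hcomp₃ Λ Θ) (hcomp₃ Λ' Θ')
  whiskL₂ : ∀ {x y z : Obj} (f : Hom x y) {g h : Hom y z},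
      Two g h → Two (comp₁ f g) (comp₁ f h)
  whiskR₂ : ∀ {x y z : Obj} {f g : Hom x y} (h : Hom y z),
      Two f g → Two (comp₁ f h) (comp₁ g h)
  whiskL₃ : ∀ {x y z : Obj} (f : Hom x y) {g h : Hom y z} {φ ψ : Two g h},
      Three φ ψ → Three (whiskL₂ f φ) (whiskL₂ f ψ)
  whiskR₃ : ∀ {x y z : Obj} {f g : Hom x y} (h : Hom y z) {φ ψ : Two f g},
      Three φ ψ → Three (whiskR₂ h φ) (whiskR₂ h ψ)
  whiskL₂_id : ∀ {x y z : Obj} (f : Hom x y) (g : Hom y z),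
      whiskL₂ f (id₂ g) = id₂ (comp₁ f g)
  whiskL₂_comp : ∀ {x y z : Obj} (f : Hom x y) {g h k : Hom y z} (φ : Two g h) (ψ : Two h k),
      whiskL₂ f (comp₂ φ ψ) = comp₂ (whiskL₂ f φ) (whiskL₂ f ψ)
  whiskR₂_id : ∀ {x y z : Obj} (f : Hom x y) (g : Hom y z),
      whiskR₂ g (id₂ f) = id₂ (comp₁ f g)
  whiskR₂_comp : ∀ {x y z : Obj} {f g h : Hom x y} (k : Hom y z) (φ : Two f g) (ψ : Two g h),
      whiskR₂ k (comp₂ φ ψ) = comp₂ (whiskR₂ k φ) (whiskR₂ k ψ)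
  whiskL₃_id : ∀ {x y z : Obj} (f : Hom x y) {g h : Hom y z} (φ : Two g h),
      whiskL₃ f (id₃ φ) = id₃ (whiskL₂ f φ)
  whiskL₃_comp : ∀ {x y z : Obj} (f : Hom x y) {g h : Hom y z} {φ ψ χ : Two g h}
      (Λ : Three φ ψ) (Θ : Three ψ χ),
      whiskL₃ f (comp₃ Λ Θ) = comp₃ (whiskL₃ f Λ) (whiskL₃ f Θ)
  whiskR₃_id : ∀ {x y z : Obj} {f g : Hom x y} (k : Hom y z) (φ : Two f g),
      whiskR₃ k (id₃ φ) = id₃ (whiskR₂ k φ)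
  whiskR₃_comp : ∀ {x y z : Obj} {f g : Hom x y} (k : Hom y z) {φ ψ χ : Two f g}
      (Λ : Three φ ψ) (Θ : Three ψ χ),
      whiskR₃ k (comp₃ Λ Θ) = comp₃ (whiskR₃ k Λ) (whiskR₃ k Θ)
  whiskL₂_one : ∀ {x y : Obj} {g h : Hom x y} (φ : Two g h), HEq (whiskL₂ (id₁ x) φ) φ
  whiskR₂_one : ∀ {x y : Obj} {g h : Hom x y} (φ : Two g h), HEq (whiskR₂ (id₁ y) φ) φ
  whiskL₂_comp₁ : ∀ {w x y z : Obj} (f : Hom w x) (g : Hom x y) {h k : Hom y z} (φ : Two h k),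
      HEq (whiskL₂ (comp₁ f g) φ) (whiskL₂ f (whiskL₂ g φ))
  whiskR₂_comp₁ : ∀ {w x y z : Obj} {f g : Hom w x} (h : Hom x y) (k : Hom y z) (φ : Two f g),
      HEq (whiskR₂ (comp₁ h k) φ) (whiskR₂ k (whiskR₂ h φ))
  whisk_comm : ∀ {w x y z : Obj} (f : Hom w x) {g h : Hom x y} (k : Hom y z) (φ : Two g h),
      HEq (whiskR₂ k (whiskL₂ f φ)) (whiskL₂ f (whiskR₂ k φ))
  interch : ∀ {x y z : Obj} {f f' : Hom x y} {g g' : Hom y z} (φ : Two f f') (ψ : Two g g'),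
      Three (comp₂ (whiskR₂ g φ) (whiskL₂ f' ψ)) (comp₂ (whiskL₂ f ψ) (whiskR₂ g' φ))
  interchInv : ∀ {x y z : Obj} {f f' : Hom x y} {g g' : Hom y z} (φ : Two f f') (ψ : Two g g'),
      Three (comp₂ (whiskL₂ f ψ) (whiskR₂ g' φ)) (comp₂ (whiskR₂ g φ) (whiskL₂ f' ψ))
  interch_inv : ∀ {x y z : Obj} {f f' : Hom x y} {g g' : Hom y z} (φ : Two f f') (ψ : Two g g'),
      comp₃ (interch φ ψ) (interchInv φ ψ) = id₃ (comp₂ (whiskR₂ g φ) (whiskL₂ f' ψ))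
  inv_interch : ∀ {x y z : Obj} {f f' : Hom x y} {g g' : Hom y z} (φ : Two f f') (ψ : Two g g'),
      comp₃ (interchInv φ ψ) (interch φ ψ) = id₃ (comp₂ (whiskL₂ f ψ) (whiskR₂ g' φ))
  interch_natL : ∀ {x y z : Obj} {f f' : Hom x y} {g g' : Hom y z} {φ φ' : Two f f'}
      (Λ : Three φ φ') (ψ : Two g g'),
      comp₃ (hcomp₃ (whiskR₃ g Λ) (id₃ (whiskL₂ f' ψ))) (interch φ' ψ)
        = comp₃ (interch φ ψ) (hcomp₃ (id₃ (whiskL₂ f ψ)) (whiskR₃ g' Λ))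
  interch_natR : ∀ {x y z : Obj} {f f' : Hom x y} {g g' : Hom y z} {ψ ψ' : Two g g'}
      (φ : Two f f') (Θ : Three ψ ψ'),
      comp₃ (hcomp₃ (id₃ (whiskR₂ g φ)) (whiskL₃ f' Θ)) (interch φ ψ')
        = comp₃ (interch φ ψ) (hcomp₃ (whiskL₃ f Θ) (id₃ (whiskR₂ g' φ)))

namespace GrayCategory

variable (C : GrayCategory)

/-- Transport of a 2-cell along equalities of its boundary 1-cells. -/
def cast₂ {x y : C.Obj} {f f' g g' : C.Hom x y} (hf : f = f') (hg : g = g')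
    (φ : C.Two f g) : C.Two f' g' := by subst hf; subst hg; exact φ

@[simp] theorem cast₂_rfl {x y : C.Obj} {f g : C.Hom x y} (φ : C.Two f g) :
    C.cast₂ rfl rfl φ = φ := rfl

/-- Transport of a 3-cell along equalities of its boundary 2-cells. -/
def cast₃ {x y : C.Obj} {f g : C.Hom x y} {φ φ' ψ ψ' : C.Two f g} (h : φ = φ')
    (h' : ψ = ψ') (Λ : C.Three φ ψ) : C.Three φ' ψ' := by subst h; subst h'; exact Λ

/-- Transport of a 1-cell along equalities of objects. -/
def hcast {x x' y y' : C.Obj} (hx : x = x') (hy : y = y') (f : C.Hom x y) : C.Hom x' y' := by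
  subst hx; subst hy; exact f

@[simp] theorem hcast_rfl {x y : C.Obj} (f : C.Hom x y) : C.hcast rfl rfl f = f := rfl

/-- Transport of a 2-cell along equalities of objects. -/
def hcast₂ {x x' y y' : C.Obj} (hx : x = x') (hy : y = y') {f g : C.Hom x y}
    (φ : C.Two f g) : C.Two (C.hcast hx hy f) (C.hcast hx hy g) := by
  subst hx; subst hy; exact φ

theorem hcast_comp₁ {x x' y y' z z' : C.Obj} (hx : x = x') (hy : y = y') (hz : z = z')
    (f : C.Hom x y) (g : C.Hom y z) :
    C.comp₁ (C.hcast hx hy f) (C.hcast hy hz g) = C.hcast hx hz (C.comp₁ f g) := by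
  subst hx; subst hy; subst hz; rfl

/-- A 2-cell is invertible. -/
def Inv2 {x y : C.Obj} {f g : C.Hom x y} (φ : C.Two f g) : Prop :=
  ∃ ψ : C.Two g f, C.comp₂ φ ψ = C.id₂ f ∧ C.comp₂ ψ φ = C.id₂ g

/-- A 3-cell is invertible. -/
def Inv3 {x y : C.Obj} {f g : C.Hom x y} {φ ψ : C.Two f g} (Λ : C.Three φ ψ) : Prop :=
  ∃ Θ : C.Three ψ φ, C.comp₃ Λ Θ = C.id₃ φ ∧ C.comp₃ Θ Λ = C.id₃ ψ

/-- The terminal (one-point) Gray-category. -/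
def unitGray : GrayCategory where
  Obj := PUnit
  Hom _ _ := PUnit
  Two _ _ := PUnit
  Three _ _ := PUnit
  id₁ _ := PUnit.unit
  comp₁ := @fun _ _ _ _ _ => PUnit.unit
  id_comp₁ := by intros; rfl
  comp₁_id := by intros; rfl
  assoc₁ := by intros; rfl
  id₂ := @fun _ _ _ => PUnit.unit
  comp₂ := @fun _ _ _ _ _ _ _ => PUnit.unit
  id_comp₂ := by intros; rfl
  comp₂_id := by intros; rfl
  assoc₂ := by intros; rfl
  id₃ := @fun _ _ _ _ _ => PUnit.unit
  comp₃ := @fun _ _ _ _ _ _ _ _ _ => PUnit.unit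
  id_comp₃ := by intros; rfl
  comp₃_id := by intros; rfl
  assoc₃ := by intros; rfl
  hcomp₃ := @fun _ _ _ _ _ _ _ _ _ _ _ => PUnit.unit
  hcomp₃_id := by intros; rfl
  hcomp₃_comp := by intros; rfl
  whiskL₂ := @fun _ _ _ _ _ _ _ => PUnit.unit
  whiskR₂ := @fun _ _ _ _ _ _ _ => PUnit.unit
  whiskL₃ := @fun _ _ _ _ _ _ _ _ _ => PUnit.unit
  whiskR₃ := @fun _ _ _ _ _ _ _ _ _ => PUnit.unit
  whiskL₂_id := by intros; rfl
  whiskL₂_comp := by intros; rfl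
  whiskR₂_id := by intros; rfl
  whiskR₂_comp := by intros; rfl
  whiskL₃_id := by intros; rfl
  whiskL₃_comp := by intros; rfl
  whiskR₃_id := by intros; rfl
  whiskR₃_comp := by intros; rfl
  whiskL₂_one := by intros; exact HEq.rfl
  whiskR₂_one := by intros; exact HEq.rfl
  whiskL₂_comp₁ := by intros; exact HEq.rfl
  whiskR₂_comp₁ := by intros; exact HEq.rfl
  whisk_comm := by intros; exact HEq.rfl
  interch := @fun _ _ _ _ _ _ _ _ _ => PUnit.unit
  interchInv := @fun _ _ _ _ _ _ _ _ _ => PUnit.unit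
  interch_inv := by intros; rfl
  inv_interch := by intros; rfl
  interch_natL := by intros; rfl
  interch_natR := by intros; rfl

/-- A conjugation lemma for invertible 3-cells. -/
theorem conj₃ {x y : C.Obj} {f g : C.Hom x y} {S1 S2 T1 T2 : C.Two f g}
    {A : C.Three S1 S2} {I : C.Three S1 T1} {I' : C.Three S2 T2} {B : C.Three T1 T2}
    {J : C.Three T1 S1} {J' : C.Three T2 S2}
    (hnat : C.comp₃ A I' = C.comp₃ I B)
    (hJI : C.comp₃ J I = C.id₃ T1) (hI'J' : C.comp₃ I' J' = C.id₃ S2) :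
    C.comp₃ B J' = C.comp₃ J A := by
  calc C.comp₃ B J'
      = C.comp₃ (C.comp₃ J I) (C.comp₃ B J') := by rw [hJI, C.id_comp₃]
    _ = C.comp₃ J (C.comp₃ (C.comp₃ I B) J') := by rw [C.assoc₃, C.assoc₃]
    _ = C.comp₃ J (C.comp₃ (C.comp₃ A I') J') := by rw [hnat]
    _ = C.comp₃ J (C.comp₃ A (C.comp₃ I' J')) := by rw [C.assoc₃]
    _ = C.comp₃ J A := by rw [hI'J', C.comp₃_id]

end GrayCategory
namespace GrayCategory

/-- The dual Gray-category `A^co`, obtained by reversing the 2-cells only. -/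
def co (C : GrayCategory) : GrayCategory where
  Obj := C.Obj
  Hom := C.Hom
  Two f g := C.Two g f
  Three φ ψ := C.Three φ ψ
  id₁ := C.id₁
  comp₁ := C.comp₁
  id_comp₁ := C.id_comp₁
  comp₁_id := C.comp₁_id
  assoc₁ := C.assoc₁
  id₂ := @fun x y f => C.id₂ f
  comp₂ := @fun x y f g h φ ψ => C.comp₂ ψ φ
  id_comp₂ := @fun x y f g φ => C.comp₂_id φ
  comp₂_id := @fun x y f g φ => C.id_comp₂ φ
  assoc₂ := @fun x y f g h k φ ψ χ => (C.assoc₂ χ ψ φ).symm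
  id₃ := @fun x y f g φ => C.id₃ φ
  comp₃ := @fun x y f g φ ψ χ Λ Θ => C.comp₃ Λ Θ
  id_comp₃ := @fun x y f g φ ψ Λ => C.id_comp₃ Λ
  comp₃_id := @fun x y f g φ ψ Λ => C.comp₃_id Λ
  assoc₃ := @fun x y f g φ ψ χ ω Λ Θ Ξ => C.assoc₃ Λ Θ Ξ
  hcomp₃ := @fun x y f g h φ φ' ψ ψ' Λ Θ => C.hcomp₃ Θ Λ
  hcomp₃_id := @fun x y f g h φ ψ => C.hcomp₃_id ψ φ
  hcomp₃_comp := @fun x y f g h φ φ' φ'' ψ ψ' ψ'' Λ Λ' Θ Θ' => C.hcomp₃_comp Θ Θ' Λ Λ'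
  whiskL₂ := @fun x y z f g h φ => C.whiskL₂ f φ
  whiskR₂ := @fun x y z f g h φ => C.whiskR₂ h φ
  whiskL₃ := @fun x y z f g h φ ψ Λ => C.whiskL₃ f Λ
  whiskR₃ := @fun x y z f g h φ ψ Λ => C.whiskR₃ h Λ
  whiskL₂_id := @fun x y z f g => C.whiskL₂_id f g
  whiskL₂_comp := @fun x y z f g h k φ ψ => C.whiskL₂_comp f ψ φ
  whiskR₂_id := @fun x y z f g => C.whiskR₂_id f g
  whiskR₂_comp := @fun x y z f g h k φ ψ => C.whiskR₂_comp k ψ φ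
  whiskL₃_id := @fun x y z f g h φ => C.whiskL₃_id f φ
  whiskL₃_comp := @fun x y z f g h φ ψ χ Λ Θ => C.whiskL₃_comp f Λ Θ
  whiskR₃_id := @fun x y z f g k φ => C.whiskR₃_id k φ
  whiskR₃_comp := @fun x y z f g k φ ψ χ Λ Θ => C.whiskR₃_comp k Λ Θ
  whiskL₂_one := @fun x y g h φ => C.whiskL₂_one φ
  whiskR₂_one := @fun x y g h φ => C.whiskR₂_one φ
  whiskL₂_comp₁ := @fun w x y z f g h k φ => C.whiskL₂_comp₁ f g φ
  whiskR₂_comp₁ := @fun w x y z f g h k φ => C.whiskR₂_comp₁ h k φ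
  whisk_comm := @fun w x y z f g h k φ => C.whisk_comm f k φ
  interch := @fun x y z f f' g g' φ ψ => C.interchInv φ ψ
  interchInv := @fun x y z f f' g g' φ ψ => C.interch φ ψ
  interch_inv := @fun x y z f f' g g' φ ψ => C.inv_interch φ ψ
  inv_interch := @fun x y z f f' g g' φ ψ => C.interch_inv φ ψ
  interch_natL := by
    intro x y z f f' g g' φ φ' Λ ψ
    exact C.conj₃ (C.interch_natL Λ ψ) (C.inv_interch φ ψ) (C.interch_inv φ' ψ)
  interch_natR := by
    intro x y z f f' g g' ψ ψ' φ Θ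
    exact C.conj₃ (C.interch_natR φ Θ) (C.inv_interch φ ψ) (C.interch_inv φ ψ')

@[simp] theorem co_co (C : GrayCategory) : C.co.co = C := rfl

end GrayCategory
/-! ## Gray-functors (strict maps) and the category `G-Cat` -/

/-- A (strict) Gray-functor: a map of 3-graphs preserving all of the structure of a
Gray-category on the nose. -/
structure GrayFunctor (A B : GrayCategory) where
  obj : A.Obj → B.Obj
  map : ∀ {x y : A.Obj}, A.Hom x y → B.Hom (obj x) (obj y)
  map₂ : ∀ {x y : A.Obj} {f g : A.Hom x y}, A.Two f g → B.Two (map f) (map g)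
  map₃ : ∀ {x y : A.Obj} {f g : A.Hom x y} {φ ψ : A.Two f g},
      A.Three φ ψ → B.Three (map₂ φ) (map₂ ψ)
  map_id₁ : ∀ x, map (A.id₁ x) = B.id₁ (obj x)
  map_comp₁ : ∀ {x y z : A.Obj} (f : A.Hom x y) (g : A.Hom y z),
      map (A.comp₁ f g) = B.comp₁ (map f) (map g)
  map2_id : ∀ {x y : A.Obj} (f : A.Hom x y), map₂ (A.id₂ f) = B.id₂ (map f)
  map2_comp : ∀ {x y : A.Obj} {f g h : A.Hom x y} (φ : A.Two f g) (ψ : A.Two g h),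
      map₂ (A.comp₂ φ ψ) = B.comp₂ (map₂ φ) (map₂ ψ)
  map3_id : ∀ {x y : A.Obj} {f g : A.Hom x y} (φ : A.Two f g), map₃ (A.id₃ φ) = B.id₃ (map₂ φ)
  map3_comp : ∀ {x y : A.Obj} {f g : A.Hom x y} {φ ψ χ : A.Two f g}
      (Λ : A.Three φ ψ) (Θ : A.Three ψ χ), map₃ (A.comp₃ Λ Θ) = B.comp₃ (map₃ Λ) (map₃ Θ)
  map3_hcomp : ∀ {x y : A.Obj} {f g h : A.Hom x y} {φ φ' : A.Two f g} {ψ ψ' : A.Two g h}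
      (Λ : A.Three φ φ') (Θ : A.Three ψ ψ'),
      map₃ (A.hcomp₃ Λ Θ)
        = B.cast₃ (map2_comp φ ψ).symm (map2_comp φ' ψ').symm (B.hcomp₃ (map₃ Λ) (map₃ Θ))
  map_whiskL : ∀ {x y z : A.Obj} (f : A.Hom x y) {g h : A.Hom y z} (φ : A.Two g h),
      map₂ (A.whiskL₂ f φ)
        = B.cast₂ (map_comp₁ f g).symm (map_comp₁ f h).symm (B.whiskL₂ (map f) (map₂ φ))
  map_whiskR : ∀ {x y z : A.Obj} {f g : A.Hom x y} (k : A.Hom y z) (φ : A.Two f g),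
      map₂ (A.whiskR₂ k φ)
        = B.cast₂ (map_comp₁ f k).symm (map_comp₁ g k).symm (B.whiskR₂ (map k) (map₂ φ))

namespace GrayFunctor

theorem eq_of {A B : GrayCategory} {F G : GrayFunctor A B}
    (h0 : F.obj = G.obj) (h1 : HEq (@GrayFunctor.map A B F) (@GrayFunctor.map A B G))
    (h2 : HEq (@GrayFunctor.map₂ A B F) (@GrayFunctor.map₂ A B G))
    (h3 : HEq (@GrayFunctor.map₃ A B F) (@GrayFunctor.map₃ A B G)) : F = G := by
  obtain ⟨o, m, m2, m3, p1, p2, p3, p4, p5, p6, p7, p8, p9⟩ := F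
  obtain ⟨o', m', m2', m3', q1, q2, q3, q4, q5, q6, q7, q8, q9⟩ := G
  subst h0
  have e1 := eq_of_heq h1; subst e1
  have e2 := eq_of_heq h2; subst e2
  have e3 := eq_of_heq h3; subst e3
  rfl

/-- The identity Gray-functor. -/
def id (A : GrayCategory) : GrayFunctor A A where
  obj x := x
  map f := f
  map₂ φ := φ
  map₃ Λ := Λ
  map_id₁ _ := rfl
  map_comp₁ _ _ := rfl
  map2_id _ := rfl
  map2_comp _ _ := rfl
  map3_id _ := rfl
  map3_comp _ _ := rfl
  map3_hcomp _ _ := rfl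
  map_whiskL := by intros; rfl
  map_whiskR := by intros; rfl

theorem map₂_cast₂ {A B : GrayCategory} (F : GrayFunctor A B) {x y : A.Obj}
    {f f' g g' : A.Hom x y} (hf : f = f') (hg : g = g') (φ : A.Two f g) :
    F.map₂ (A.cast₂ hf hg φ)
      = B.cast₂ (congrArg F.map hf) (congrArg F.map hg) (F.map₂ φ) := by
  subst hf; subst hg; rfl

theorem map₃_cast₃ {A B : GrayCategory} (F : GrayFunctor A B) {x y : A.Obj}
    {f g : A.Hom x y} {φ φ' ψ ψ' : A.Two f g} (h : φ = φ') (h' : ψ = ψ') (Λ : A.Three φ ψ) :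
    F.map₃ (A.cast₃ h h' Λ)
      = B.cast₃ (congrArg F.map₂ h) (congrArg F.map₂ h') (F.map₃ Λ) := by
  subst h; subst h'; rfl

theorem cast₃_cast₃ (B : GrayCategory) {x y : B.Obj} {f g : B.Hom x y}
    {φ φ' φ'' ψ ψ' ψ'' : B.Two f g}
    (h1 : φ = φ') (h2 : ψ = ψ') (h3 : φ' = φ'') (h4 : ψ' = ψ'') (Λ : B.Three φ ψ) :
    B.cast₃ h3 h4 (B.cast₃ h1 h2 Λ) = B.cast₃ (h1.trans h3) (h2.trans h4) Λ := by
  subst h1; subst h2; subst h3; subst h4; rfl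

theorem cast₂_cast₂ (B : GrayCategory) {x y : B.Obj} {f f' f'' g g' g'' : B.Hom x y}
    (h1 : f = f') (h2 : g = g') (h3 : f' = f'') (h4 : g' = g'') (φ : B.Two f g) :
    B.cast₂ h3 h4 (B.cast₂ h1 h2 φ) = B.cast₂ (h1.trans h3) (h2.trans h4) φ := by
  subst h1; subst h2; subst h3; subst h4; rfl

/-- Composition of Gray-functors. -/
def comp {A B C : GrayCategory} (F : GrayFunctor A B) (G : GrayFunctor B C) :
    GrayFunctor A C where
  obj x := G.obj (F.obj x)
  map f := G.map (F.map f)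
  map₂ φ := G.map₂ (F.map₂ φ)
  map₃ Λ := G.map₃ (F.map₃ Λ)
  map_id₁ x := by
    show G.map (F.map (A.id₁ x)) = _
    rw [F.map_id₁, G.map_id₁]
  map_comp₁ f g := by
    show G.map (F.map (A.comp₁ f g)) = _
    rw [F.map_comp₁, G.map_comp₁]
  map2_id f := by
    show G.map₂ (F.map₂ (A.id₂ f)) = _
    rw [F.map2_id, G.map2_id]
  map2_comp φ ψ := by
    show G.map₂ (F.map₂ (A.comp₂ φ ψ)) = _
    rw [F.map2_comp, G.map2_comp]
  map3_id φ := by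
    show G.map₃ (F.map₃ (A.id₃ φ)) = _
    rw [F.map3_id, G.map3_id]
  map3_comp Λ Θ := by
    show G.map₃ (F.map₃ (A.comp₃ Λ Θ)) = _
    rw [F.map3_comp, G.map3_comp]
  map3_hcomp Λ Θ := by
    show G.map₃ (F.map₃ (A.hcomp₃ Λ Θ)) = _
    rw [F.map3_hcomp, G.map₃_cast₃, G.map3_hcomp, cast₃_cast₃]
  map_whiskL := by
    intro x y z f g h φ
    show G.map₂ (F.map₂ (A.whiskL₂ f φ)) = _
    rw [F.map_whiskL, G.map₂_cast₂, G.map_whiskL, cast₂_cast₂]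
  map_whiskR := by
    intro x y z f g k φ
    show G.map₂ (F.map₂ (A.whiskR₂ k φ)) = _
    rw [F.map_whiskR, G.map₂_cast₂, G.map_whiskR, cast₂_cast₂]

end GrayFunctor

/-- The category `G-Cat` of Gray-categories and Gray-functors. -/
instance : Category.{0, 1} GrayCategory where
  Hom := GrayFunctor
  id := GrayFunctor.id
  comp := GrayFunctor.comp
  id_comp _ := GrayFunctor.eq_of rfl HEq.rfl HEq.rfl HEq.rfl
  comp_id _ := GrayFunctor.eq_of rfl HEq.rfl HEq.rfl HEq.rfl
  assoc _ _ _ := GrayFunctor.eq_of rfl HEq.rfl HEq.rfl HEq.rfl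
namespace GrayCategory

theorem cast₂_comp₂ (C : GrayCategory) {x y : C.Obj} {f g h f' g' h' : C.Hom x y}
    (h1 : f = f') (h2 : g = g') (h3 : h = h') (X : C.Two f g) (Y : C.Two g h) :
    C.comp₂ (C.cast₂ h1 h2 X) (C.cast₂ h2 h3 Y) = C.cast₂ h1 h3 (C.comp₂ X Y) := by
  subst h1; subst h2; subst h3; rfl

theorem cast₂_id₂ (C : GrayCategory) {x y : C.Obj} {f g : C.Hom x y} (h : f = g) :
    C.cast₂ h h (C.id₂ f) = C.id₂ g := by subst h; rfl

end GrayCategory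

/-! ## Pseudomaps of Gray-categories and the category `G-Cat_p` -/

/-- A pseudomap of Gray-categories (Gohla's pseudo-Gray-functors): a map of 3-graphs,
preserving identity 1-cells, locally a 2-functor, together with an invertible cocycle
`c f g : F f ∘ F g ≅ F (f ∘ g)`.  (The remaining cocycle coherence, degeneracy,
whiskering and interchange axioms of Gohla are elided.) -/
structure Pseudomap (A B : GrayCategory) where
  obj : A.Obj → B.Obj
  map : ∀ {x y : A.Obj}, A.Hom x y → B.Hom (obj x) (obj y)
  map₂ : ∀ {x y : A.Obj} {f g : A.Hom x y}, A.Two f g → B.Two (map f) (map g)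
  map₃ : ∀ {x y : A.Obj} {f g : A.Hom x y} {φ ψ : A.Two f g},
      A.Three φ ψ → B.Three (map₂ φ) (map₂ ψ)
  c : ∀ (x y z : A.Obj) (f : A.Hom x y) (g : A.Hom y z),
      B.Two (B.comp₁ (map f) (map g)) (map (A.comp₁ f g))
  cInv : ∀ (x y z : A.Obj) (f : A.Hom x y) (g : A.Hom y z),
      B.Two (map (A.comp₁ f g)) (B.comp₁ (map f) (map g))
  map_id₁ : ∀ x, map (A.id₁ x) = B.id₁ (obj x)
  map2_id : ∀ {x y : A.Obj} (f : A.Hom x y), map₂ (A.id₂ f) = B.id₂ (map f)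
  map2_comp : ∀ {x y : A.Obj} {f g h : A.Hom x y} (φ : A.Two f g) (ψ : A.Two g h),
      map₂ (A.comp₂ φ ψ) = B.comp₂ (map₂ φ) (map₂ ψ)
  map3_id : ∀ {x y : A.Obj} {f g : A.Hom x y} (φ : A.Two f g), map₃ (A.id₃ φ) = B.id₃ (map₂ φ)
  map3_comp : ∀ {x y : A.Obj} {f g : A.Hom x y} {φ ψ χ : A.Two f g}
      (Λ : A.Three φ ψ) (Θ : A.Three ψ χ), map₃ (A.comp₃ Λ Θ) = B.comp₃ (map₃ Λ) (map₃ Θ)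
  map3_hcomp : ∀ {x y : A.Obj} {f g h : A.Hom x y} {φ φ' : A.Two f g} {ψ ψ' : A.Two g h}
      (Λ : A.Three φ φ') (Θ : A.Three ψ ψ'),
      map₃ (A.hcomp₃ Λ Θ)
        = B.cast₃ (map2_comp φ ψ).symm (map2_comp φ' ψ').symm (B.hcomp₃ (map₃ Λ) (map₃ Θ))
  c_cInv : ∀ (x y z : A.Obj) (f : A.Hom x y) (g : A.Hom y z),
      B.comp₂ (c x y z f g) (cInv x y z f g) = B.id₂ (B.comp₁ (map f) (map g))
  cInv_c : ∀ (x y z : A.Obj) (f : A.Hom x y) (g : A.Hom y z),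
      B.comp₂ (cInv x y z f g) (c x y z f g) = B.id₂ (map (A.comp₁ f g))

namespace Pseudomap

theorem eq_of {A B : GrayCategory} {F G : Pseudomap A B}
    (h0 : F.obj = G.obj) (h1 : HEq (@Pseudomap.map A B F) (@Pseudomap.map A B G))
    (h2 : HEq (@Pseudomap.map₂ A B F) (@Pseudomap.map₂ A B G))
    (h3 : HEq (@Pseudomap.map₃ A B F) (@Pseudomap.map₃ A B G))
    (h4 : HEq F.c G.c) (h5 : HEq F.cInv G.cInv) : F = G := by
  obtain ⟨o, m, m2, m3, c, ci, p1, p2, p3, p4, p5, p6, p7, p8⟩ := F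
  obtain ⟨o', m', m2', m3', c', ci', q1, q2, q3, q4, q5, q6, q7, q8⟩ := G
  subst h0
  have e1 := eq_of_heq h1; subst e1
  have e2 := eq_of_heq h2; subst e2
  have e3 := eq_of_heq h3; subst e3
  have e4 := eq_of_heq h4; subst e4
  have e5 := eq_of_heq h5; subst e5
  rfl

/-- The identity pseudomap. -/
def id (A : GrayCategory) : Pseudomap A A where
  obj x := x
  map f := f
  map₂ φ := φ
  map₃ Λ := Λ
  c _ _ _ f g := A.id₂ (A.comp₁ f g)
  cInv _ _ _ f g := A.id₂ (A.comp₁ f g)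
  map_id₁ _ := rfl
  map2_id _ := rfl
  map2_comp _ _ := rfl
  map3_id _ := rfl
  map3_comp _ _ := rfl
  map3_hcomp _ _ := rfl
  c_cInv _ _ _ f g := A.comp₂_id _
  cInv_c _ _ _ f g := A.comp₂_id _

theorem map₃_cast₃ {A B : GrayCategory} (F : Pseudomap A B) {x y : A.Obj}
    {f g : A.Hom x y} {φ φ' ψ ψ' : A.Two f g} (h : φ = φ') (h' : ψ = ψ') (Λ : A.Three φ ψ) :
    F.map₃ (A.cast₃ h h' Λ)
      = B.cast₃ (congrArg F.map₂ h) (congrArg F.map₂ h') (F.map₃ Λ) := by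
  subst h; subst h'; rfl

/-- Composition of pseudomaps. -/
def comp {A B C : GrayCategory} (F : Pseudomap A B) (G : Pseudomap B C) :
    Pseudomap A C where
  obj x := G.obj (F.obj x)
  map f := G.map (F.map f)
  map₂ φ := G.map₂ (F.map₂ φ)
  map₃ Λ := G.map₃ (F.map₃ Λ)
  c x y z f g := C.comp₂ (G.c _ _ _ (F.map f) (F.map g)) (G.map₂ (F.c x y z f g))
  cInv x y z f g := C.comp₂ (G.map₂ (F.cInv x y z f g)) (G.cInv _ _ _ (F.map f) (F.map g))
  map_id₁ x := by
    show G.map (F.map (A.id₁ x)) = _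
    rw [F.map_id₁, G.map_id₁]
  map2_id f := by
    show G.map₂ (F.map₂ (A.id₂ f)) = _
    rw [F.map2_id, G.map2_id]
  map2_comp φ ψ := by
    show G.map₂ (F.map₂ (A.comp₂ φ ψ)) = _
    rw [F.map2_comp, G.map2_comp]
  map3_id φ := by
    show G.map₃ (F.map₃ (A.id₃ φ)) = _
    rw [F.map3_id, G.map3_id]
  map3_comp Λ Θ := by
    show G.map₃ (F.map₃ (A.comp₃ Λ Θ)) = _
    rw [F.map3_comp, G.map3_comp]
  map3_hcomp := by
    intro x y f g h φ φ' ψ ψ' Λ Θ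
    show G.map₃ (F.map₃ (A.hcomp₃ Λ Θ)) = _
    rw [F.map3_hcomp, Pseudomap.map₃_cast₃, G.map3_hcomp, GrayFunctor.cast₃_cast₃]
  c_cInv x y z f g := by
    show C.comp₂ (C.comp₂ (G.c _ _ _ _ _) (G.map₂ (F.c x y z f g)))
        (C.comp₂ (G.map₂ (F.cInv x y z f g)) (G.cInv _ _ _ _ _)) = _
    rw [C.assoc₂, ← C.assoc₂ (G.map₂ (F.c x y z f g)), ← G.map2_comp, F.c_cInv, G.map2_id,
      C.id_comp₂, G.c_cInv]
  cInv_c x y z f g := by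
    show C.comp₂ (C.comp₂ (G.map₂ (F.cInv x y z f g)) (G.cInv _ _ _ _ _))
        (C.comp₂ (G.c _ _ _ _ _) (G.map₂ (F.c x y z f g))) = _
    rw [C.assoc₂, ← C.assoc₂ (G.cInv _ _ _ (F.map f) (F.map g)), G.cInv_c, C.id_comp₂,
      ← G.map2_comp, F.cInv_c, G.map2_id]

/-- A pseudomap is strict (i.e. is a Gray-functor) when its cocycle is an identity. -/
def IsStrict {A B : GrayCategory} (P : Pseudomap A B) : Prop :=
  ∀ (x y z : A.Obj) (f : A.Hom x y) (g : A.Hom y z),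
    ∃ e : B.comp₁ (P.map f) (P.map g) = P.map (A.comp₁ f g),
      P.c x y z f g = B.cast₂ rfl e (B.id₂ (B.comp₁ (P.map f) (P.map g)))

/-- The dual pseudomap between the dual Gray-categories. -/
def co {A B : GrayCategory} (F : Pseudomap A B) : Pseudomap A.co B.co where
  obj := F.obj
  map := F.map
  map₂ := @fun _ _ _ _ φ => F.map₂ φ
  map₃ := @fun _ _ _ _ _ _ Λ => F.map₃ Λ
  c x y z f g := F.cInv x y z f g
  cInv x y z f g := F.c x y z f g
  map_id₁ := F.map_id₁
  map2_id f := F.map2_id f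
  map2_comp := @fun _ _ _ _ _ φ ψ => F.map2_comp ψ φ
  map3_id := @fun _ _ _ _ φ => F.map3_id φ
  map3_comp := @fun _ _ _ _ _ _ _ Λ Θ => F.map3_comp Λ Θ
  map3_hcomp := @fun x y f g h φ φ' ψ ψ' Λ Θ => F.map3_hcomp Θ Λ
  c_cInv x y z f g := F.c_cInv x y z f g
  cInv_c x y z f g := F.cInv_c x y z f g

/-- Composition of a pseudomap with a strict Gray-functor. -/
def postStrict {A B C : GrayCategory} (F : Pseudomap A B) (G : GrayFunctor B C) :
    Pseudomap A C where
  obj x := G.obj (F.obj x)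
  map f := G.map (F.map f)
  map₂ φ := G.map₂ (F.map₂ φ)
  map₃ Λ := G.map₃ (F.map₃ Λ)
  c x y z f g := C.cast₂ (G.map_comp₁ (F.map f) (F.map g)) rfl (G.map₂ (F.c x y z f g))
  cInv x y z f g := C.cast₂ rfl (G.map_comp₁ (F.map f) (F.map g)) (G.map₂ (F.cInv x y z f g))
  map_id₁ x := by
    show G.map (F.map (A.id₁ x)) = _
    rw [F.map_id₁, G.map_id₁]
  map2_id f := by
    show G.map₂ (F.map₂ (A.id₂ f)) = _
    rw [F.map2_id, G.map2_id]
  map2_comp φ ψ := by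
    show G.map₂ (F.map₂ (A.comp₂ φ ψ)) = _
    rw [F.map2_comp, G.map2_comp]
  map3_id φ := by
    show G.map₃ (F.map₃ (A.id₃ φ)) = _
    rw [F.map3_id, G.map3_id]
  map3_comp Λ Θ := by
    show G.map₃ (F.map₃ (A.comp₃ Λ Θ)) = _
    rw [F.map3_comp, G.map3_comp]
  map3_hcomp := by
    intro x y f g h φ φ' ψ ψ' Λ Θ
    show G.map₃ (F.map₃ (A.hcomp₃ Λ Θ)) = _
    rw [F.map3_hcomp, G.map₃_cast₃, G.map3_hcomp, GrayFunctor.cast₃_cast₃]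
  c_cInv x y z f g := by
    show C.comp₂ (C.cast₂ (G.map_comp₁ (F.map f) (F.map g)) rfl (G.map₂ (F.c x y z f g)))
        (C.cast₂ rfl (G.map_comp₁ (F.map f) (F.map g)) (G.map₂ (F.cInv x y z f g))) = _
    rw [C.cast₂_comp₂, ← G.map2_comp, F.c_cInv, G.map2_id, C.cast₂_id₂]
  cInv_c x y z f g := by
    show C.comp₂ (C.cast₂ rfl (G.map_comp₁ (F.map f) (F.map g)) (G.map₂ (F.cInv x y z f g)))
        (C.cast₂ (G.map_comp₁ (F.map f) (F.map g)) rfl (G.map₂ (F.c x y z f g))) = _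
    rw [C.cast₂_comp₂, ← G.map2_comp, F.cInv_c, G.map2_id, C.cast₂_id₂]

end Pseudomap

/-- `G-Cat_p`: the category of Gray-categories and pseudomaps. -/
structure GCatP : Type 1 where
  gray : GrayCategory

instance : Category.{0, 1} GCatP where
  Hom A B := Pseudomap A.gray B.gray
  id A := Pseudomap.id A.gray
  comp F G := F.comp G
  id_comp {A B} F := by
    refine Pseudomap.eq_of rfl HEq.rfl HEq.rfl HEq.rfl (heq_of_eq ?_) (heq_of_eq ?_)
    · funext x y z f g
      show B.gray.comp₂ (F.c x y z f g) (F.map₂ (A.gray.id₂ _)) = F.c x y z f g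
      rw [F.map2_id, B.gray.comp₂_id]
    · funext x y z f g
      show B.gray.comp₂ (F.map₂ (A.gray.id₂ _)) (F.cInv x y z f g) = F.cInv x y z f g
      rw [F.map2_id, B.gray.id_comp₂]
  comp_id {A B} F := by
    refine Pseudomap.eq_of rfl HEq.rfl HEq.rfl HEq.rfl (heq_of_eq ?_) (heq_of_eq ?_)
    · funext x y z f g
      show B.gray.comp₂ (B.gray.id₂ _) (F.c x y z f g) = F.c x y z f g
      rw [B.gray.id_comp₂]
    · funext x y z f g
      show B.gray.comp₂ (F.cInv x y z f g) (B.gray.id₂ _) = F.cInv x y z f g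
      rw [B.gray.comp₂_id]
  assoc {A B C D} F G H := by
    refine Pseudomap.eq_of rfl HEq.rfl HEq.rfl HEq.rfl (heq_of_eq ?_) (heq_of_eq ?_)
    · funext x y z f g
      show D.gray.comp₂ (H.c _ _ _ _ _)
            (H.map₂ (C.gray.comp₂ (G.c _ _ _ _ _) (G.map₂ (F.c x y z f g))))
        = D.gray.comp₂
            (D.gray.comp₂ (H.c _ _ _ _ _) (H.map₂ (G.c _ _ _ _ _)))
            (H.map₂ (G.map₂ (F.c x y z f g)))
      rw [H.map2_comp, D.gray.assoc₂]
    · funext x y z f g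
      show D.gray.comp₂
            (H.map₂ (C.gray.comp₂ (G.map₂ (F.cInv x y z f g)) (G.cInv _ _ _ _ _)))
            (H.cInv _ _ _ _ _)
        = D.gray.comp₂ (H.map₂ (G.map₂ (F.cInv x y z f g)))
            (D.gray.comp₂ (H.map₂ (G.cInv _ _ _ _ _)) (H.cInv _ _ _ _ _))
      rw [H.map2_comp, D.gray.assoc₂]
/-! ## Lax transformations, modifications, perturbations; pseudo-transformations -/

/-- A lax transformation between pseudomaps of Gray-categories, in the sense of Gohla:
components `app`, naturality 2-cells `nat`, 3-cells `nat₃` for 2-cells of the source, and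
invertible coherence 3-cells `natc` for composable pairs of 1-cells.  (Two of Gohla's five
coherence axioms, whose statements require lengthy pasting composites, are elided.) -/
structure LaxTransformation {A B : GrayCategory} (F G : Pseudomap A B) where
  app : ∀ x : A.Obj, B.Hom (F.obj x) (G.obj x)
  nat : ∀ {x y : A.Obj} (f : A.Hom x y),
      B.Two (B.comp₁ (app x) (G.map f)) (B.comp₁ (F.map f) (app y))
  nat₃ : ∀ {x y : A.Obj} {f f' : A.Hom x y} (φ : A.Two f f'),
      B.Three (B.comp₂ (nat f) (B.whiskR₂ (app y) (F.map₂ φ)))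
        (B.comp₂ (B.whiskL₂ (app x) (G.map₂ φ)) (nat f'))
  natc : ∀ {x y z : A.Obj} (f : A.Hom x y) (g : A.Hom y z),
      B.Three
        (B.comp₂ (B.comp₂
            (B.whiskR₂ (G.map g) (nat f))
            (B.cast₂ (B.assoc₁ (F.map f) (app y) (G.map g)).symm
              (B.assoc₁ (F.map f) (F.map g) (app z)).symm
              (B.whiskL₂ (F.map f) (nat g))))
          (B.whiskR₂ (app z) (F.c x y z f g)))
        (B.comp₂
          (B.cast₂ (B.assoc₁ (app x) (G.map f) (G.map g)).symm rfl
            (B.whiskL₂ (app x) (G.c x y z f g)))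
          (nat (A.comp₁ f g)))
  natc_inv : ∀ {x y z : A.Obj} (f : A.Hom x y) (g : A.Hom y z), B.Inv3 (natc f g)
  nat_id : ∀ x : A.Obj, HEq (nat (A.id₁ x)) (B.id₂ (app x))
  nat₃_id : ∀ {x y : A.Obj} (f : A.Hom x y),
      nat₃ (A.id₂ f)
        = B.cast₃ (by rw [F.map2_id, B.whiskR₂_id, B.comp₂_id])
            (by rw [G.map2_id, B.whiskL₂_id, B.id_comp₂]) (B.id₃ (nat f))
  nat₃_nat : ∀ {x y : A.Obj} {f f' : A.Hom x y} {φ φ' : A.Two f f'} (Γ : A.Three φ φ'),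
      B.comp₃ (B.hcomp₃ (B.id₃ (nat f)) (B.whiskR₃ (app y) (F.map₃ Γ))) (nat₃ φ')
        = B.comp₃ (nat₃ φ) (B.hcomp₃ (B.whiskL₃ (app x) (G.map₃ Γ)) (B.id₃ (nat f')))

/-- A modification between lax transformations.  (Two of the three coherence axioms are
elided; the degeneracy axiom is kept.) -/
structure Modification {A B : GrayCategory} {F G : Pseudomap A B}
    (α β : LaxTransformation F G) where
  mod : ∀ x : A.Obj, B.Two (α.app x) (β.app x)
  natm : ∀ {x y : A.Obj} (f : A.Hom x y),
      B.Three (B.comp₂ (α.nat f) (B.whiskL₂ (F.map f) (mod y)))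
        (B.comp₂ (B.whiskR₂ (G.map f) (mod x)) (β.nat f))
  natm_id : ∀ x : A.Obj, HEq (natm (A.id₁ x)) (B.id₃ (mod x))

/-- A perturbation between modifications. -/
structure Perturbation {A B : GrayCategory} {F G : Pseudomap A B}
    {α β : LaxTransformation F G} (Λ Γ : Modification α β) where
  pert : ∀ x : A.Obj, B.Three (Λ.mod x) (Γ.mod x)
  pert_nat : ∀ {x y : A.Obj} (f : A.Hom x y),
      B.comp₃ (B.hcomp₃ (B.id₃ (α.nat f)) (B.whiskL₃ (F.map f) (pert y))) (Γ.natm f)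
        = B.comp₃ (Λ.natm f) (B.hcomp₃ (B.whiskR₃ (G.map f) (pert x)) (B.id₃ (β.nat f)))

/-- A pseudo-transformation: a lax transformation together with adjoint equivalences
`natInv f ⊣ nat f` for every 1-cell `f`, which are identities on identity 1-cells, and
whose 3-cell components `nat₃` are invertible. -/
structure PseudoTransformation {A B : GrayCategory} (F G : Pseudomap A B) extends
    LaxTransformation F G where
  natInv : ∀ {x y : A.Obj} (f : A.Hom x y),
      B.Two (B.comp₁ (F.map f) (toLaxTransformation.app y))
        (B.comp₁ (toLaxTransformation.app x) (G.map f))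
  adjUnit : ∀ {x y : A.Obj} (f : A.Hom x y),
      B.Three (B.id₂ (B.comp₁ (F.map f) (toLaxTransformation.app y)))
        (B.comp₂ (natInv f) (toLaxTransformation.nat f))
  adjCounit : ∀ {x y : A.Obj} (f : A.Hom x y),
      B.Three (B.comp₂ (toLaxTransformation.nat f) (natInv f))
        (B.id₂ (B.comp₁ (toLaxTransformation.app x) (G.map f)))
  triangle₁ : ∀ {x y : A.Obj} (f : A.Hom x y),
      B.comp₃ (B.hcomp₃ (adjUnit f) (B.id₃ (natInv f)))
          (B.cast₃ (B.assoc₂ (natInv f) (toLaxTransformation.nat f) (natInv f)).symm rfl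
            (B.hcomp₃ (B.id₃ (natInv f)) (adjCounit f)))
        = B.cast₃ (B.id_comp₂ (natInv f)).symm (B.comp₂_id (natInv f)).symm
            (B.id₃ (natInv f))
  triangle₂ : ∀ {x y : A.Obj} (f : A.Hom x y),
      B.comp₃ (B.hcomp₃ (B.id₃ (toLaxTransformation.nat f)) (adjUnit f))
          (B.cast₃ (B.assoc₂ (toLaxTransformation.nat f) (natInv f)
              (toLaxTransformation.nat f)) rfl
            (B.hcomp₃ (adjCounit f) (B.id₃ (toLaxTransformation.nat f))))
        = B.cast₃ (B.comp₂_id (toLaxTransformation.nat f)).symm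
            (B.id_comp₂ (toLaxTransformation.nat f)).symm
            (B.id₃ (toLaxTransformation.nat f))
  adjUnit_inv : ∀ {x y : A.Obj} (f : A.Hom x y), B.Inv3 (adjUnit f)
  adjCounit_inv : ∀ {x y : A.Obj} (f : A.Hom x y), B.Inv3 (adjCounit f)
  natInv_id : ∀ x : A.Obj, HEq (natInv (A.id₁ x)) (B.id₂ (toLaxTransformation.app x))
  adjUnit_id : ∀ x : A.Obj,
      HEq (adjUnit (A.id₁ x)) (B.id₃ (B.id₂ (toLaxTransformation.app x)))
  adjCounit_id : ∀ x : A.Obj,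
      HEq (adjCounit (A.id₁ x)) (B.id₃ (B.id₂ (toLaxTransformation.app x)))
  nat₃_inv : ∀ {x y : A.Obj} {f f' : A.Hom x y} (φ : A.Two f f'),
      B.Inv3 (toLaxTransformation.nat₃ φ)

/-- A pseudo-modification: a modification all of whose 3-cell components are invertible. -/
structure PseudoModification {A B : GrayCategory} {F G : Pseudomap A B}
    (α β : PseudoTransformation F G) extends
      Modification α.toLaxTransformation β.toLaxTransformation where
  natm_inv : ∀ {x y : A.Obj} (f : A.Hom x y), B.Inv3 (toModification.natm f)

/-- A "mapping-space datum": a family of Gray-categories `obj A B`, whose 0-cells are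
identified with the pseudomaps `A → B`, whose 1-cells are identified with the lax
transformations, whose 2-cells are identified with the modifications and whose 3-cells
are identified with the perturbations (i.e. Gohla's mapping space `Lax(A,B)`). -/
structure LaxSpace where
  obj : GrayCategory → GrayCategory → GrayCategory
  e0 : ∀ A B : GrayCategory, (obj A B).Obj ≃ Pseudomap A B
  e1 : ∀ (A B : GrayCategory) (F G : (obj A B).Obj),
      (obj A B).Hom F G ≃ LaxTransformation (e0 A B F) (e0 A B G)
  e2 : ∀ (A B : GrayCategory) (F G : (obj A B).Obj) (α β : (obj A B).Hom F G),
      (obj A B).Two α β ≃ Modification (e1 A B F G α) (e1 A B F G β)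
  e3 : ∀ (A B : GrayCategory) (F G : (obj A B).Obj) (α β : (obj A B).Hom F G)
      (Λ Γ : (obj A B).Two α β),
      (obj A B).Three Λ Γ ≃ Perturbation (e2 A B F G α β Λ) (e2 A B F G α β Γ)

/-- As `LaxSpace`, but with 1-cells the pseudo-transformations and 2-cells the
pseudo-modifications (the mapping space `Psd(A,B)`). -/
structure PsdSpace where
  obj : GrayCategory → GrayCategory → GrayCategory
  e0 : ∀ A B : GrayCategory, (obj A B).Obj ≃ Pseudomap A B
  e1 : ∀ (A B : GrayCategory) (F G : (obj A B).Obj),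
      (obj A B).Hom F G ≃ PseudoTransformation (e0 A B F) (e0 A B G)
  e2 : ∀ (A B : GrayCategory) (F G : (obj A B).Obj) (α β : (obj A B).Hom F G),
      (obj A B).Two α β ≃ PseudoModification (e1 A B F G α) (e1 A B F G β)
  e3 : ∀ (A B : GrayCategory) (F G : (obj A B).Obj) (α β : (obj A B).Hom F G)
      (Λ Γ : (obj A B).Two α β),
      (obj A B).Three Λ Γ
        ≃ Perturbation (e2 A B F G α β Λ).toModification (e2 A B F G α β Γ).toModification

/-- As `LaxSpace`, but for the full sub-Gray-category spanned by the strict Gray-functors: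
the 0-cells are identified with the *strict* pseudomaps (Gohla's `Lax(A,B)_s`). -/
structure LaxSSpace where
  obj : GrayCategory → GrayCategory → GrayCategory
  e0 : ∀ A B : GrayCategory, (obj A B).Obj ≃ {P : Pseudomap A B // P.IsStrict}
  e1 : ∀ (A B : GrayCategory) (F G : (obj A B).Obj),
      (obj A B).Hom F G ≃ LaxTransformation (e0 A B F).1 (e0 A B G).1
  e2 : ∀ (A B : GrayCategory) (F G : (obj A B).Obj) (α β : (obj A B).Hom F G),
      (obj A B).Two α β ≃ Modification (e1 A B F G α) (e1 A B F G β)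
  e3 : ∀ (A B : GrayCategory) (F G : (obj A B).Obj) (α β : (obj A B).Hom F G)
      (Λ Γ : (obj A B).Two α β),
      (obj A B).Three Λ Γ ≃ Perturbation (e2 A B F G α β Λ) (e2 A B F G α β Γ)

/-- The pseudo analogue of `LaxSSpace` (the mapping space `Psd(A,B)_s`). -/
structure PsdSSpace where
  obj : GrayCategory → GrayCategory → GrayCategory
  e0 : ∀ A B : GrayCategory, (obj A B).Obj ≃ {P : Pseudomap A B // P.IsStrict}
  e1 : ∀ (A B : GrayCategory) (F G : (obj A B).Obj),
      (obj A B).Hom F G ≃ PseudoTransformation (e0 A B F).1 (e0 A B G).1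
  e2 : ∀ (A B : GrayCategory) (F G : (obj A B).Obj) (α β : (obj A B).Hom F G),
      (obj A B).Two α β ≃ PseudoModification (e1 A B F G α) (e1 A B F G β)
  e3 : ∀ (A B : GrayCategory) (F G : (obj A B).Obj) (α β : (obj A B).Hom F G)
      (Λ Γ : (obj A B).Two α β),
      (obj A B).Three Λ Γ
        ≃ Perturbation (e2 A B F G α β Λ).toModification (e2 A B F G α β Γ).toModification
/-! ## Loose binary multimaps of Gray-categories -/

/-- The underlying data of a binary multimap: pseudomaps in each variable agreeing on
objects. -/
structure BinData (A B C : GrayCategory) where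
  row : A.Obj → Pseudomap B C
  col : B.Obj → Pseudomap A C
  objEq : ∀ (a : A.Obj) (b : B.Obj), (row a).obj b = (col b).obj a

namespace BinData

variable {A B C : GrayCategory} (F : BinData A B C)

/-- The value `F(a,b)`. -/
def P (a : A.Obj) (b : B.Obj) : C.Obj := (F.row a).obj b

/-- The 1-cell `F^a(B₁) : F(a,b) → F(a,b')`. -/
def oneB (a : A.Obj) {b b' : B.Obj} (B1 : B.Hom b b') : C.Hom (F.P a b) (F.P a b') :=
  (F.row a).map B1

/-- The 1-cell `F_b(A₁) : F(a,b) → F(a',b)`. -/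
def oneA {a a' : A.Obj} (A1 : A.Hom a a') (b : B.Obj) : C.Hom (F.P a b) (F.P a' b) :=
  C.hcast (F.objEq a b).symm (F.objEq a' b).symm ((F.col b).map A1)

/-- The 2-cell `F^a(β)`. -/
def twoB (a : A.Obj) {b b' : B.Obj} {B1 B1' : B.Hom b b'} (β : B.Two B1 B1') :
    C.Two (F.oneB a B1) (F.oneB a B1') := (F.row a).map₂ β

/-- The 2-cell `F_b(α)`. -/
def twoA {a a' : A.Obj} {A1 A1' : A.Hom a a'} (α : A.Two A1 A1') (b : B.Obj) :
    C.Two (F.oneA A1 b) (F.oneA A1' b) :=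
  C.hcast₂ (F.objEq a b).symm (F.objEq a' b).symm ((F.col b).map₂ α)

/-- The cocycle of `F^a`. -/
def cocB (a : A.Obj) {b b' b'' : B.Obj} (B1 : B.Hom b b') (B2 : B.Hom b' b'') :
    C.Two (C.comp₁ (F.oneB a B1) (F.oneB a B2)) (F.oneB a (B.comp₁ B1 B2)) :=
  (F.row a).c b b' b'' B1 B2

/-- The cocycle of `F_b`. -/
def cocA {a a' a'' : A.Obj} (A1 : A.Hom a a') (A2 : A.Hom a' a'') (b : B.Obj) :
    C.Two (C.comp₁ (F.oneA A1 b) (F.oneA A2 b)) (F.oneA (A.comp₁ A1 A2) b) :=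
  C.cast₂
    (C.hcast_comp₁ (F.objEq a b).symm (F.objEq a' b).symm (F.objEq a'' b).symm
      ((F.col b).map A1) ((F.col b).map A2)).symm rfl
    (C.hcast₂ (F.objEq a b).symm (F.objEq a'' b).symm ((F.col b).c a a' a'' A1 A2))

end BinData

/-- A loose binary multimap `F : A, B → C` of Gray-categories: pseudomaps in each
variable, interchange 2-cells `cell`, 3-cells `cellA`, `cellB` for 2-cells of either
variable, and invertible coherence 3-cells `cellcA` (`F^{A₂,A₁}_B`) and `cellcB`
(`F^A_{B₂,B₁}`) for composable pairs of 1-cells.  (The remaining coherence equations of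
Appendix C of the paper are elided.) -/
structure LooseBinary (A B C : GrayCategory) extends BinData A B C where
  cell : ∀ {a a' : A.Obj} (A1 : A.Hom a a') {b b' : B.Obj} (B1 : B.Hom b b'),
      C.Two (C.comp₁ (toBinData.oneA A1 b) (toBinData.oneB a' B1))
        (C.comp₁ (toBinData.oneB a B1) (toBinData.oneA A1 b'))
  cellA : ∀ {a a' : A.Obj} {A1 A1' : A.Hom a a'} (α : A.Two A1 A1') {b b' : B.Obj}
      (B1 : B.Hom b b'),
      C.Three (C.comp₂ (C.whiskR₂ (toBinData.oneB a' B1) (toBinData.twoA α b)) (cell A1' B1))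
        (C.comp₂ (cell A1 B1) (C.whiskL₂ (toBinData.oneB a B1) (toBinData.twoA α b')))
  cellB : ∀ {a a' : A.Obj} (A1 : A.Hom a a') {b b' : B.Obj} {B1 B1' : B.Hom b b'}
      (β : B.Two B1 B1'),
      C.Three (C.comp₂ (C.whiskL₂ (toBinData.oneA A1 b) (toBinData.twoB a' β)) (cell A1 B1'))
        (C.comp₂ (cell A1 B1) (C.whiskR₂ (toBinData.oneA A1 b') (toBinData.twoB a β)))
  cellcA : ∀ {a a' a'' : A.Obj} (A1 : A.Hom a a') (A2 : A.Hom a' a'') {b b' : B.Obj}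
      (B1 : B.Hom b b'),
      C.Three
        (C.comp₂ (C.whiskR₂ (toBinData.oneB a'' B1) (toBinData.cocA A1 A2 b))
          (cell (A.comp₁ A1 A2) B1))
        (C.comp₂ (C.comp₂
            (C.cast₂ (C.assoc₁ (toBinData.oneA A1 b) (toBinData.oneA A2 b)
                (toBinData.oneB a'' B1)).symm
              (C.assoc₁ (toBinData.oneA A1 b) (toBinData.oneB a' B1)
                (toBinData.oneA A2 b')).symm
              (C.whiskL₂ (toBinData.oneA A1 b) (cell A2 B1)))
            (C.whiskR₂ (toBinData.oneA A2 b') (cell A1 B1)))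
          (C.cast₂ (C.assoc₁ (toBinData.oneB a B1) (toBinData.oneA A1 b')
              (toBinData.oneA A2 b')).symm rfl
            (C.whiskL₂ (toBinData.oneB a B1) (toBinData.cocA A1 A2 b'))))
  cellcB : ∀ {a a' : A.Obj} (A1 : A.Hom a a') {b b' b'' : B.Obj} (B1 : B.Hom b b')
      (B2 : B.Hom b' b''),
      C.Three
        (C.comp₂ (C.comp₂
            (C.whiskR₂ (toBinData.oneB a' B2) (cell A1 B1))
            (C.cast₂ (C.assoc₁ (toBinData.oneB a B1) (toBinData.oneA A1 b')
                (toBinData.oneB a' B2)).symm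
              (C.assoc₁ (toBinData.oneB a B1) (toBinData.oneB a B2)
                (toBinData.oneA A1 b'')).symm
              (C.whiskL₂ (toBinData.oneB a B1) (cell A1 B2))))
          (C.whiskR₂ (toBinData.oneA A1 b'') (toBinData.cocB a B1 B2)))
        (C.comp₂
          (C.cast₂ (C.assoc₁ (toBinData.oneA A1 b) (toBinData.oneB a' B1)
              (toBinData.oneB a' B2)).symm rfl
            (C.whiskL₂ (toBinData.oneA A1 b) (toBinData.cocB a' B1 B2)))
          (cell A1 (B.comp₁ B1 B2)))
  cellcA_inv : ∀ {a a' a'' : A.Obj} (A1 : A.Hom a a') (A2 : A.Hom a' a'') {b b' : B.Obj}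
      (B1 : B.Hom b b'), C.Inv3 (cellcA A1 A2 B1)
  cellcB_inv : ∀ {a a' : A.Obj} (A1 : A.Hom a a') {b b' b'' : B.Obj} (B1 : B.Hom b b')
      (B2 : B.Hom b' b''), C.Inv3 (cellcB A1 B1 B2)

namespace LooseBinary

variable {A B C : GrayCategory}

/-- A binary multimap is tight when every `F_b` is a (strict) Gray-functor and every
coherence cell `F^{A₂,A₁}_B` is an identity. -/
def Tight (F : LooseBinary A B C) : Prop :=
  (∀ b : B.Obj, (F.col b).IsStrict) ∧
    (∀ {a a' a'' : A.Obj} (A1 : A.Hom a a') (A2 : A.Hom a' a'') {b b' : B.Obj}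
      (B1 : B.Hom b b'),
      ∃ e, F.cellcA A1 A2 B1 = C.cast₃ rfl e (C.id₃ _))

end LooseBinary

/-- The data enhancing a loose binary multimap to a *pseudo* binary multimap: adjoint
equivalences on all the interchange 2-cells, which are identities on identity 1-cells,
and with the 3-cells `cellA`, `cellB` invertible. -/
structure PseudoBinaryStr {A B C : GrayCategory} (F : LooseBinary A B C) where
  cellInv : ∀ {a a' : A.Obj} (A1 : A.Hom a a') {b b' : B.Obj} (B1 : B.Hom b b'),
      C.Two (C.comp₁ (F.oneB a B1) (F.oneA A1 b')) (C.comp₁ (F.oneA A1 b) (F.oneB a' B1))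
  aUnit : ∀ {a a' : A.Obj} (A1 : A.Hom a a') {b b' : B.Obj} (B1 : B.Hom b b'),
      C.Three (C.id₂ (C.comp₁ (F.oneB a B1) (F.oneA A1 b')))
        (C.comp₂ (cellInv A1 B1) (F.cell A1 B1))
  aCounit : ∀ {a a' : A.Obj} (A1 : A.Hom a a') {b b' : B.Obj} (B1 : B.Hom b b'),
      C.Three (C.comp₂ (F.cell A1 B1) (cellInv A1 B1))
        (C.id₂ (C.comp₁ (F.oneA A1 b) (F.oneB a' B1)))
  triangle₁ : ∀ {a a' : A.Obj} (A1 : A.Hom a a') {b b' : B.Obj} (B1 : B.Hom b b'),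
      C.comp₃ (C.hcomp₃ (aUnit A1 B1) (C.id₃ (cellInv A1 B1)))
          (C.cast₃ (C.assoc₂ (cellInv A1 B1) (F.cell A1 B1) (cellInv A1 B1)).symm rfl
            (C.hcomp₃ (C.id₃ (cellInv A1 B1)) (aCounit A1 B1)))
        = C.cast₃ (C.id_comp₂ (cellInv A1 B1)).symm (C.comp₂_id (cellInv A1 B1)).symm
            (C.id₃ (cellInv A1 B1))
  triangle₂ : ∀ {a a' : A.Obj} (A1 : A.Hom a a') {b b' : B.Obj} (B1 : B.Hom b b'),
      C.comp₃ (C.hcomp₃ (C.id₃ (F.cell A1 B1)) (aUnit A1 B1))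
          (C.cast₃ (C.assoc₂ (F.cell A1 B1) (cellInv A1 B1) (F.cell A1 B1)) rfl
            (C.hcomp₃ (aCounit A1 B1) (C.id₃ (F.cell A1 B1))))
        = C.cast₃ (C.comp₂_id (F.cell A1 B1)).symm (C.id_comp₂ (F.cell A1 B1)).symm
            (C.id₃ (F.cell A1 B1))
  aUnit_inv : ∀ {a a' : A.Obj} (A1 : A.Hom a a') {b b' : B.Obj} (B1 : B.Hom b b'),
      C.Inv3 (aUnit A1 B1)
  aCounit_inv : ∀ {a a' : A.Obj} (A1 : A.Hom a a') {b b' : B.Obj} (B1 : B.Hom b b'),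
      C.Inv3 (aCounit A1 B1)
  cell_idA : ∀ (a : A.Obj) {b b' : B.Obj} (B1 : B.Hom b b'),
      HEq (F.cell (A.id₁ a) B1) (C.id₂ (F.oneB a B1))
  cell_idB : ∀ {a a' : A.Obj} (A1 : A.Hom a a') (b : B.Obj),
      HEq (F.cell A1 (B.id₁ b)) (C.id₂ (F.oneA A1 b))
  cellInv_idA : ∀ (a : A.Obj) {b b' : B.Obj} (B1 : B.Hom b b'),
      HEq (cellInv (A.id₁ a) B1) (C.id₂ (F.oneB a B1))
  cellInv_idB : ∀ {a a' : A.Obj} (A1 : A.Hom a a') (b : B.Obj),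
      HEq (cellInv A1 (B.id₁ b)) (C.id₂ (F.oneA A1 b))
  cellA_inv : ∀ {a a' : A.Obj} {A1 A1' : A.Hom a a'} (α : A.Two A1 A1') {b b' : B.Obj}
      (B1 : B.Hom b b'), C.Inv3 (F.cellA α B1)
  cellB_inv : ∀ {a a' : A.Obj} (A1 : A.Hom a a') {b b' : B.Obj} {B1 B1' : B.Hom b b'}
      (β : B.Two B1 B1'), C.Inv3 (F.cellB A1 β)

/-- A pseudo binary multimap. -/
def PseudoBinary (A B C : GrayCategory) : Type :=
  Σ F : LooseBinary A B C, PseudoBinaryStr F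

/-- A pseudo binary multimap is tight when its underlying lax binary multimap is. -/
def PseudoBinary.Tight {A B C : GrayCategory} (F : PseudoBinary A B C) : Prop := F.1.Tight
/-! ## Loose ternary and 4-ary multimaps of Gray-categories -/

/-- The underlying data of a ternary multimap: binary multimaps in each pair of
variables, agreeing pairwise on their common restrictions. -/
structure TernData (A B C D : GrayCategory) where
  atA : A.Obj → LooseBinary B C D
  atB : B.Obj → LooseBinary A C D
  atC : C.Obj → LooseBinary A B D
  rowAB : ∀ (a : A.Obj) (b : B.Obj), (atA a).row b = (atB b).row a
  colAC : ∀ (a : A.Obj) (c : C.Obj), (atA a).col c = (atC c).row a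
  colBC : ∀ (b : B.Obj) (c : C.Obj), (atB b).col c = (atC c).col b

namespace TernData

variable {A B C D : GrayCategory} (F : TernData A B C D)

/-- The value `F(a,b,c)`. -/
def Q (a : A.Obj) (b : B.Obj) (c : C.Obj) : D.Obj := ((F.atA a).row b).obj c

/-- The 1-cell `F^{a}_{b}(C₁)`. -/
def oneC {c c' : C.Obj} (C1 : C.Hom c c') (a : A.Obj) (b : B.Obj) :
    D.Hom (F.Q a b c) (F.Q a b c') := ((F.atA a).row b).map C1

/-- The 1-cell `F^{a}_{c}(B₁)`. -/
def oneB {b b' : B.Obj} (B1 : B.Hom b b') (a : A.Obj) (c : C.Obj) :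
    D.Hom (F.Q a b c) (F.Q a b' c) :=
  D.hcast ((F.atA a).objEq b c).symm ((F.atA a).objEq b' c).symm (((F.atA a).col c).map B1)

/-- The 1-cell `F^{b}_{c}(A₁)`. -/
def oneA {a a' : A.Obj} (A1 : A.Hom a a') (b : B.Obj) (c : C.Obj) :
    D.Hom (F.Q a b c) (F.Q a' b c) :=
  D.hcast
    (by show ((F.atB b).col c).obj a = ((F.atA a).row b).obj c
        rw [F.rowAB a b, (F.atB b).objEq a c])
    (by show ((F.atB b).col c).obj a' = ((F.atA a').row b).obj c
        rw [F.rowAB a' b, (F.atB b).objEq a' c])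
    (((F.atB b).col c).map A1)

end TernData

/-- A loose ternary multimap `F : A, B, C → D` of Gray-categories: binary multimaps
in each pair of variables agreeing on their common restrictions, together with
interchange 2-cells normalised to the common carrier (identified with the interchange
cells of the binary components by the `spec` fields) and incubator 3-cells.
(The nine incubator axioms of the paper are elided.) -/
structure LooseTernary (A B C D : GrayCategory) extends TernData A B C D where
  qAB : ∀ {a a' : A.Obj} (A1 : A.Hom a a') {b b' : B.Obj} (B1 : B.Hom b b') (c : C.Obj),
      D.Two (D.comp₁ (toTernData.oneA A1 b c) (toTernData.oneB B1 a' c))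
        (D.comp₁ (toTernData.oneB B1 a c) (toTernData.oneA A1 b' c))
  qAB_spec : ∀ {a a' : A.Obj} (A1 : A.Hom a a') {b b' : B.Obj} (B1 : B.Hom b b')
      (c : C.Obj), HEq (qAB A1 B1 c) ((toTernData.atC c).cell A1 B1)
  qAC : ∀ {a a' : A.Obj} (A1 : A.Hom a a') {c c' : C.Obj} (C1 : C.Hom c c') (b : B.Obj),
      D.Two (D.comp₁ (toTernData.oneA A1 b c) (toTernData.oneC C1 a' b))
        (D.comp₁ (toTernData.oneC C1 a b) (toTernData.oneA A1 b c'))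
  qAC_spec : ∀ {a a' : A.Obj} (A1 : A.Hom a a') {c c' : C.Obj} (C1 : C.Hom c c')
      (b : B.Obj), HEq (qAC A1 C1 b) ((toTernData.atB b).cell A1 C1)
  qBC : ∀ {b b' : B.Obj} (B1 : B.Hom b b') {c c' : C.Obj} (C1 : C.Hom c c') (a : A.Obj),
      D.Two (D.comp₁ (toTernData.oneB B1 a c) (toTernData.oneC C1 a b'))
        (D.comp₁ (toTernData.oneC C1 a b) (toTernData.oneB B1 a c'))
  qBC_spec : ∀ {b b' : B.Obj} (B1 : B.Hom b b') {c c' : C.Obj} (C1 : C.Hom c c')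
      (a : A.Obj), HEq (qBC B1 C1 a) ((toTernData.atA a).cell B1 C1)
  incub : ∀ {a a' : A.Obj} (A1 : A.Hom a a') {b b' : B.Obj} (B1 : B.Hom b b')
      {c c' : C.Obj} (C1 : C.Hom c c'),
      D.Three
        (D.comp₂ (D.comp₂
            (D.whiskR₂ (toTernData.oneC C1 a' b') (qAB A1 B1 c))
            (D.cast₂
              (D.assoc₁ (toTernData.oneB B1 a c) (toTernData.oneA A1 b' c)
                (toTernData.oneC C1 a' b')).symm
              (D.assoc₁ (toTernData.oneB B1 a c) (toTernData.oneC C1 a b')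
                (toTernData.oneA A1 b' c')).symm
              (D.whiskL₂ (toTernData.oneB B1 a c) (qAC A1 C1 b'))))
          (D.whiskR₂ (toTernData.oneA A1 b' c') (qBC B1 C1 a)))
        (D.comp₂ (D.comp₂
            (D.cast₂
              (D.assoc₁ (toTernData.oneA A1 b c) (toTernData.oneB B1 a' c)
                (toTernData.oneC C1 a' b')).symm
              (D.assoc₁ (toTernData.oneA A1 b c) (toTernData.oneC C1 a' b)
                (toTernData.oneB B1 a' c')).symm
              (D.whiskL₂ (toTernData.oneA A1 b c) (qBC B1 C1 a')))
            (D.whiskR₂ (toTernData.oneB B1 a' c') (qAC A1 C1 b)))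
          (D.cast₂
            (D.assoc₁ (toTernData.oneC C1 a b) (toTernData.oneA A1 b c')
              (toTernData.oneB B1 a' c')).symm
            (D.assoc₁ (toTernData.oneC C1 a b) (toTernData.oneB B1 a c')
              (toTernData.oneA A1 b' c')).symm
            (D.whiskL₂ (toTernData.oneC C1 a b) (qAB A1 B1 c'))))

namespace LooseTernary

variable {A B C D : GrayCategory}

/-- A ternary multimap is tight when its binary components `F_b` and `F_c` are tight. -/
def Tight (F : LooseTernary A B C D) : Prop :=
  (∀ b : B.Obj, (F.atB b).Tight) ∧ (∀ c : C.Obj, (F.atC c).Tight)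

end LooseTernary

/-- The data enhancing a loose ternary multimap to a pseudo ternary multimap. -/
structure PseudoTernaryStr {A B C D : GrayCategory} (F : LooseTernary A B C D) where
  pA : ∀ a : A.Obj, PseudoBinaryStr (F.atA a)
  pB : ∀ b : B.Obj, PseudoBinaryStr (F.atB b)
  pC : ∀ c : C.Obj, PseudoBinaryStr (F.atC c)
  incub_inv : ∀ {a a' : A.Obj} (A1 : A.Hom a a') {b b' : B.Obj} (B1 : B.Hom b b')
      {c c' : C.Obj} (C1 : C.Hom c c'), D.Inv3 (F.incub A1 B1 C1)

/-- A pseudo ternary multimap. -/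
def PseudoTernary (A B C D : GrayCategory) : Type :=
  Σ F : LooseTernary A B C D, PseudoTernaryStr F

/-- A pseudo ternary multimap is tight when its underlying lax one is. -/
def PseudoTernary.Tight {A B C D : GrayCategory} (F : PseudoTernary A B C D) : Prop :=
  F.1.Tight

/-- A loose 4-ary multimap `F : A, B, C, D → E` of Gray-categories: ternary multimaps
in each triple of variables, satisfying the six compatibility equations between their
binary restrictions. (The mecon axiom relating their incubators is elided.) -/
structure Loose4ary (A B C D E : GrayCategory) where
  atA : A.Obj → LooseTernary B C D E
  atB : B.Obj → LooseTernary A C D E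
  atC : C.Obj → LooseTernary A B D E
  atD : D.Obj → LooseTernary A B C E
  eqAB : ∀ (a : A.Obj) (b : B.Obj), (atA a).atA b = (atB b).atA a
  eqAC : ∀ (a : A.Obj) (c : C.Obj), (atA a).atB c = (atC c).atA a
  eqAD : ∀ (a : A.Obj) (d : D.Obj), (atA a).atC d = (atD d).atA a
  eqBC : ∀ (b : B.Obj) (c : C.Obj), (atB b).atB c = (atC c).atB b
  eqBD : ∀ (b : B.Obj) (d : D.Obj), (atB b).atC d = (atD d).atB b
  eqCD : ∀ (c : C.Obj) (d : D.Obj), (atC c).atC d = (atD d).atC c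

namespace Loose4ary

variable {A B C D E : GrayCategory}

/-- A 4-ary multimap is tight when its ternary components `F_b`, `F_c` and `F_d` are. -/
def Tight (F : Loose4ary A B C D E) : Prop :=
  (∀ b : B.Obj, (F.atB b).Tight) ∧ (∀ c : C.Obj, (F.atC c).Tight) ∧
    (∀ d : D.Obj, (F.atD d).Tight)

end Loose4ary

/-- The data enhancing a loose 4-ary multimap to a pseudo 4-ary multimap. -/
structure Pseudo4aryStr {A B C D E : GrayCategory} (F : Loose4ary A B C D E) where
  pA : ∀ a : A.Obj, PseudoTernaryStr (F.atA a)
  pB : ∀ b : B.Obj, PseudoTernaryStr (F.atB b)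
  pC : ∀ c : C.Obj, PseudoTernaryStr (F.atC c)
  pD : ∀ d : D.Obj, PseudoTernaryStr (F.atD d)

/-- A pseudo 4-ary multimap. -/
def Pseudo4ary (A B C D E : GrayCategory) : Type :=
  Σ F : Loose4ary A B C D E, Pseudo4aryStr F

/-- A pseudo 4-ary multimap is tight when its underlying lax one is. -/
def Pseudo4ary.Tight {A B C D E : GrayCategory} (F : Pseudo4ary A B C D E) : Prop :=
  F.1.Tight
/-! ## Skew monoidal structures (Szlachányi) -/

/-- A (left) skew monoidal structure on a category: a tensor product, a unit, and
natural (not necessarily invertible) associativity and unit constraints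
`α : (a⊗b)⊗c → a⊗(b⊗c)`, `l : i⊗a → a`, `r : a → a⊗i`, satisfying Szlachányi's five
coherence axioms. -/
structure SkewMonoidalStructure (C : Type*) [Category C] where
  tobj : C → C → C
  thom : ∀ {a a' b b' : C}, (a ⟶ a') → (b ⟶ b') → (tobj a b ⟶ tobj a' b')
  thom_id : ∀ a b : C, thom (𝟙 a) (𝟙 b) = 𝟙 (tobj a b)
  thom_comp : ∀ {a a' a'' b b' b'' : C} (f : a ⟶ a') (f' : a' ⟶ a'')
      (g : b ⟶ b') (g' : b' ⟶ b''),
      thom (f ≫ f') (g ≫ g') = thom f g ≫ thom f' g'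
  unit : C
  assoc : ∀ a b c : C, tobj (tobj a b) c ⟶ tobj a (tobj b c)
  assoc_nat : ∀ {a a' b b' c c' : C} (f : a ⟶ a') (g : b ⟶ b') (h : c ⟶ c'),
      thom (thom f g) h ≫ assoc a' b' c' = assoc a b c ≫ thom f (thom g h)
  lunit : ∀ a : C, tobj unit a ⟶ a
  lunit_nat : ∀ {a b : C} (f : a ⟶ b), thom (𝟙 unit) f ≫ lunit b = lunit a ≫ f
  runit : ∀ a : C, a ⟶ tobj a unit
  runit_nat : ∀ {a b : C} (f : a ⟶ b), f ≫ runit b = runit a ≫ thom f (𝟙 unit)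
  pentagon : ∀ a b c d : C,
      thom (assoc a b c) (𝟙 d) ≫ assoc a (tobj b c) d ≫ thom (𝟙 a) (assoc b c d)
        = assoc (tobj a b) c d ≫ assoc a b (tobj c d)
  skew_iab : ∀ a b : C, assoc unit a b ≫ lunit (tobj a b) = thom (lunit a) (𝟙 b)
  skew_aib : ∀ a b : C,
      thom (runit a) (𝟙 b) ≫ assoc a unit b ≫ thom (𝟙 a) (lunit b) = 𝟙 (tobj a b)
  skew_abi : ∀ a b : C, runit (tobj a b) ≫ assoc a b unit = thom (𝟙 a) (runit b)
  skew_ii : runit unit ≫ lunit unit = 𝟙 unit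

namespace SkewMonoidalStructure

variable {C : Type*} [Category C] (S : SkewMonoidalStructure C)

/-- The endofunctor `- ⊗ b`. -/
def tensorRight (b : C) : C ⥤ C where
  obj a := S.tobj a b
  map f := S.thom f (𝟙 b)
  map_id a := S.thom_id a b
  map_comp {x y z} f g := by
    rw [← S.thom_comp, Category.comp_id]

end SkewMonoidalStructure
/-! ## `k`-ary multicategories and `k`-ary skew multicategories -/

universe u v

/-- Transport of multimaps along an equality of source lists. -/
def listCast {Obj : Type u} {k : ℕ∞}
    (Mul : ∀ l : List Obj, ((l.length : ℕ∞) ≤ k) → Obj → Type v)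
    {l l' : List Obj} {c : Obj} (e : l = l') {h : ((l.length : ℕ∞)) ≤ k}
    {h' : ((l'.length : ℕ∞)) ≤ k} (f : Mul l h c) : Mul l' h' c := by
  subst e; exact f

/-- A `k`-ary multicategory (`k ∈ ℕ₊ ∪ {ω}`, encoded as `k : ℕ∞`) with objects `Obj`:
sets of `n`-ary multimaps for all `n ≤ k`, identity unary maps, and single-variable
substitution, satisfying the unit and associativity equations. -/
structure Multicat (Obj : Type u) (k : ℕ∞) : Type (max u (v + 1)) where
  Mul : ∀ l : List Obj, ((l.length : ℕ∞) ≤ k) → Obj → Type v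
  ident : ∀ (a : Obj) (h : (([a] : List Obj).length : ℕ∞) ≤ k), Mul [a] h a
  subst : ∀ {l₁ l₂ : List Obj} {b c : Obj} {m : List Obj}
      (h : (((l₁ ++ b :: l₂ : List Obj).length : ℕ∞)) ≤ k)
      (hm : ((m.length : ℕ∞)) ≤ k)
      (h' : (((l₁ ++ (m ++ l₂) : List Obj).length : ℕ∞)) ≤ k),
      Mul (l₁ ++ b :: l₂) h c → Mul m hm b → Mul (l₁ ++ (m ++ l₂)) h' c
  subst_id_right : ∀ {l₁ l₂ : List Obj} {b c : Obj}
      (h : (((l₁ ++ b :: l₂ : List Obj).length : ℕ∞)) ≤ k) (hb) (h')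
      (f : Mul (l₁ ++ b :: l₂) h c),
      subst h hb h' f (ident b hb) = f
  subst_id_left : ∀ {m : List Obj} {c : Obj} (h1 : ((([c] : List Obj).length : ℕ∞)) ≤ k)
      (hm) (h') (f : Mul m hm c),
      HEq (subst (l₁ := []) (l₂ := []) h1 hm h' (ident c h1) f) f
  subst_assoc : ∀ {l₁ l₂ m₁ m₂ p : List Obj} {a b c : Obj}
      (h : (((l₁ ++ b :: l₂ : List Obj).length : ℕ∞)) ≤ k)
      (hg : (((m₁ ++ a :: m₂ : List Obj).length : ℕ∞)) ≤ k)
      (hp : ((p.length : ℕ∞)) ≤ k)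
      (h1 : (((m₁ ++ (p ++ m₂) : List Obj).length : ℕ∞)) ≤ k)
      (h2 : (((l₁ ++ ((m₁ ++ (p ++ m₂)) ++ l₂) : List Obj).length : ℕ∞)) ≤ k)
      (h3 : (((l₁ ++ ((m₁ ++ a :: m₂) ++ l₂) : List Obj).length : ℕ∞)) ≤ k)
      (h4 : ((((l₁ ++ m₁) ++ a :: (m₂ ++ l₂) : List Obj).length : ℕ∞)) ≤ k)
      (h5 : ((((l₁ ++ m₁) ++ (p ++ (m₂ ++ l₂)) : List Obj).length : ℕ∞)) ≤ k)
      (H : Mul (l₁ ++ b :: l₂) h c) (G : Mul (m₁ ++ a :: m₂) hg b) (F : Mul p hp a),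
      HEq (subst h h1 h2 H (subst hg hp h1 G F))
        (subst (l₁ := l₁ ++ m₁) (l₂ := m₂ ++ l₂) h4 hp h5
          (listCast Mul (by simp) (subst h hg h3 H G)) F)
  subst_comm : ∀ {l₁ l₂ l₃ m m' : List Obj} {b b' c : Obj}
      (h : (((l₁ ++ b :: (l₂ ++ b' :: l₃) : List Obj).length : ℕ∞)) ≤ k)
      (hm : ((m.length : ℕ∞)) ≤ k) (hm' : ((m'.length : ℕ∞)) ≤ k)
      (h1 : (((l₁ ++ (m ++ (l₂ ++ b' :: l₃)) : List Obj).length : ℕ∞)) ≤ k)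
      (h2 : ((((l₁ ++ m ++ l₂) ++ b' :: l₃ : List Obj).length : ℕ∞)) ≤ k)
      (h3 : ((((l₁ ++ m ++ l₂) ++ (m' ++ l₃) : List Obj).length : ℕ∞)) ≤ k)
      (h4 : ((((l₁ ++ b :: l₂) ++ b' :: l₃ : List Obj).length : ℕ∞)) ≤ k)
      (h5 : ((((l₁ ++ b :: l₂) ++ (m' ++ l₃) : List Obj).length : ℕ∞)) ≤ k)
      (h6 : (((l₁ ++ b :: (l₂ ++ (m' ++ l₃)) : List Obj).length : ℕ∞)) ≤ k)
      (h7 : (((l₁ ++ (m ++ (l₂ ++ (m' ++ l₃))) : List Obj).length : ℕ∞)) ≤ k)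
      (H : Mul (l₁ ++ b :: (l₂ ++ b' :: l₃)) h c) (G : Mul m hm b) (F : Mul m' hm' b'),
      HEq
        (subst (l₁ := l₁ ++ m ++ l₂) (l₂ := l₃) h2 hm' h3
          (listCast Mul (by simp) (subst h hm h1 H G)) F)
        (subst (l₁ := l₁) (l₂ := l₂ ++ (m' ++ l₃)) h6 hm h7
          (listCast Mul (by simp)
            (subst (l₁ := l₁ ++ b :: l₂) (l₂ := l₃) h4 hm' h5
              (listCast Mul (by simp) H) F)) G)

/-- A `k`-ary skew multicategory: a `k`-ary multicategory of loose multimaps together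
with distinguished tight multimaps, closed under the substitutions as prescribed. -/
structure SkewMulticat (Obj : Type u) (k : ℕ∞) extends Multicat.{u, v} Obj k where
  Tight : ∀ {l : List Obj} {h : ((l.length : ℕ∞)) ≤ k} {c : Obj}, Mul l h c → Prop
  tight_id : ∀ (a : Obj) (h), Tight (ident a h)
  tight_subst_fst : ∀ {l₂ : List Obj} {b c : Obj} {m : List Obj} (h) (hm) (h')
      (g : Mul (b :: l₂) h c) (f : Mul m hm b),
      Tight g → Tight f → Tight (subst (l₁ := []) (l₂ := l₂) h hm h' g f)
  tight_subst_rest : ∀ {l₁ l₂ : List Obj} {b c : Obj} {m : List Obj} (h) (hm) (h')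
      (g : Mul (l₁ ++ b :: l₂) h c) (f : Mul m hm b),
      l₁ ≠ [] → Tight g → Tight (subst h hm h' g f)

namespace SkewMulticat

variable {Obj : Type u} {k : ℕ∞}

/-- Sharpness of multimaps, by induction on the arity: every nullary multimap is sharp,
and a multimap of positive arity is sharp when it is tight and all of its substitutions
with nullary maps are sharp. -/
def SharpAux (M : SkewMulticat.{u, v} Obj k) :
    ∀ (n : ℕ) {l : List Obj} {h : ((l.length : ℕ∞)) ≤ k} {c : Obj},
      l.length = n → M.Mul l h c → Prop
  | 0, _, _, _, _, _ => True
  | n + 1, l, h, c, hn, f =>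
      M.Tight f ∧
        ∀ (l₁ l₂ : List Obj) (a : Obj) (e : l = l₁ ++ a :: l₂)
          (h0 : (((([] : List Obj)).length : ℕ∞)) ≤ k) (x : M.Mul [] h0 a)
          (h' : (((l₁ ++ (([] : List Obj) ++ l₂) : List Obj).length : ℕ∞)) ≤ k),
          M.SharpAux n
            (by subst e; simp at hn ⊢; omega)
            (M.subst (l₁ := l₁) (l₂ := l₂) (by rw [← e]; exact h) h0 h'
              (listCast M.Mul e f) x)

/-- A multimap in a skew multicategory is *sharp* if it is tight and all of its
(iterated) substitutions with nullary multimaps are sharp. -/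
def Sharp (M : SkewMulticat.{u, v} Obj k) {l : List Obj} {h : ((l.length : ℕ∞)) ≤ k}
    {c : Obj} (f : M.Mul l h c) : Prop :=
  M.SharpAux l.length rfl f

end SkewMulticat
namespace Multicat

variable {Obj : Type u} {k : ℕ∞}

/-- Closedness of a `k`-ary multicategory with internal homs `hom`: there are evaluation
binary multimaps `ev : hom b c, b → c` such that `ev ∘₁ -` is a bijection in every
arity `n < k`. -/
def ClosedWith (M : Multicat.{u, v} Obj k) (hom : Obj → Obj → Obj) : Prop :=
  ∀ (b c : Obj) (h2 : ((([hom b c, b] : List Obj).length : ℕ∞)) ≤ k),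
    ∃ ev : M.Mul [hom b c, b] h2 c,
      ∀ (l : List Obj) (hl : ((l.length : ℕ∞)) ≤ k)
        (hl' : (((l ++ [b] : List Obj).length : ℕ∞)) ≤ k),
        Function.Bijective
          (fun f : M.Mul l hl (hom b c) =>
            M.subst (l₁ := []) (l₂ := [b]) h2 hl hl' ev f)

/-- `i` is a left universal nullary map classifier in the (plain) `k`-ary
multicategory `M`. -/
def NullaryClassifierAt (M : Multicat.{u, v} Obj k) (i : Obj) : Prop :=
  ∀ h0 : ((([] : List Obj).length : ℕ∞)) ≤ k,
    ∃ u : M.Mul [] h0 i,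
      ∀ (l : List Obj) (c : Obj) (hl : ((l.length : ℕ∞)) ≤ k)
        (hl' : (((i :: l : List Obj).length : ℕ∞)) ≤ k),
        Function.Bijective
          (fun f : M.Mul (i :: l) hl' c =>
            (M.subst (l₁ := []) (l₂ := l) hl' h0 hl f u : M.Mul l hl c))

/-- The (plain) `k`-ary multicategory `M` has left universal binary map classifiers. -/
def HasBinClassifiers (M : Multicat.{u, v} Obj k) : Prop :=
  ∃ tens : Obj → Obj → Obj,
    ∀ (a b : Obj) (h2 : ((([a, b] : List Obj).length : ℕ∞)) ≤ k)
      (_h1 : ((([tens a b] : List Obj).length : ℕ∞)) ≤ k),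
      ∃ θ : M.Mul [a, b] h2 (tens a b),
        ∀ (l : List Obj) (c : Obj) (hA : (((tens a b :: l : List Obj).length : ℕ∞)) ≤ k)
          (hB : (((a :: b :: l : List Obj).length : ℕ∞)) ≤ k),
          Function.Bijective
            (fun f : M.Mul (tens a b :: l) hA c =>
              (M.subst (l₁ := []) (l₂ := l) hA h2 hB f θ :
                M.Mul (a :: b :: l) hB c))

/-- Left representability of a (plain) `k`-ary multicategory: it admits left universal
nullary and binary map classifiers. -/
def LeftRepresentable (M : Multicat.{u, v} Obj k) : Prop :=
  (∃ i, M.NullaryClassifierAt i) ∧ M.HasBinClassifiers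

end Multicat

namespace SkewMulticat

variable {Obj : Type u} {k : ℕ∞}

/-- Closedness of a `k`-ary skew multicategory with internal homs `hom`: there are tight
evaluation binary multimaps `ev : hom b c, b → c` such that `ev ∘₁ -` is a bijection on
loose multimaps in every arity `n < k`, restricting to a bijection on tight multimaps
for `1 ≤ n`. -/
def ClosedWith (M : SkewMulticat.{u, v} Obj k) (hom : Obj → Obj → Obj) : Prop :=
  ∀ (b c : Obj) (h2 : ((([hom b c, b] : List Obj).length : ℕ∞)) ≤ k),
    ∃ ev : M.Mul [hom b c, b] h2 c, M.Tight ev ∧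
      ∀ (l : List Obj) (hl : ((l.length : ℕ∞)) ≤ k)
        (hl' : (((l ++ [b] : List Obj).length : ℕ∞)) ≤ k),
        Function.Bijective
          (fun f : M.Mul l hl (hom b c) =>
            M.subst (l₁ := []) (l₂ := [b]) h2 hl hl' ev f) ∧
        ∀ f : M.Mul l hl (hom b c), l ≠ [] →
          (M.Tight f ↔ M.Tight (M.subst (l₁ := []) (l₂ := [b]) h2 hl hl' ev f))

/-- `i` is a left universal nullary map classifier in the `k`-ary skew multicategory
`M`: substitution into tight maps out of `i` classifies loose maps. -/
def NullaryClassifierAt (M : SkewMulticat.{u, v} Obj k) (i : Obj) : Prop :=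
  ∀ h0 : ((([] : List Obj).length : ℕ∞)) ≤ k,
    ∃ u : M.Mul [] h0 i,
      ∀ (l : List Obj) (c : Obj) (hl : ((l.length : ℕ∞)) ≤ k)
        (hl' : (((i :: l : List Obj).length : ℕ∞)) ≤ k),
        Function.Bijective
          (fun f : {g : M.Mul (i :: l) hl' c // M.Tight g} =>
            (M.subst (l₁ := []) (l₂ := l) hl' h0 hl f.1 u : M.Mul l hl c))

/-- The `k`-ary skew multicategory `M` has left universal tight binary map
classifiers. -/
def HasTightBinClassifiers (M : SkewMulticat.{u, v} Obj k) : Prop :=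
  ∃ tens : Obj → Obj → Obj,
    ∀ (a b : Obj) (h2 : ((([a, b] : List Obj).length : ℕ∞)) ≤ k)
      (_h1 : ((([tens a b] : List Obj).length : ℕ∞)) ≤ k),
      ∃ (θ : M.Mul [a, b] h2 (tens a b)) (θT : M.Tight θ),
        ∀ (l : List Obj) (c : Obj) (hA : (((tens a b :: l : List Obj).length : ℕ∞)) ≤ k)
          (hB : (((a :: b :: l : List Obj).length : ℕ∞)) ≤ k),
          Function.Bijective
            (fun f : {g : M.Mul (tens a b :: l) hA c // M.Tight g} =>
              (⟨M.subst (l₁ := []) (l₂ := l) hA h2 hB f.1 θ,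
                  M.tight_subst_fst hA h2 hB f.1 θ f.2 θT⟩ :
                {g : M.Mul (a :: b :: l) hB c // M.Tight g}))

/-- Left representability of a `k`-ary skew multicategory. -/
def LeftRepresentable (M : SkewMulticat.{u, v} Obj k) : Prop :=
  (∃ i, M.NullaryClassifierAt i) ∧ M.HasTightBinClassifiers

end SkewMulticat
/-! ## Multifunctors of `k`-ary (skew) multicategories -/

/-- A multifunctor between `k`-ary multicategories. -/
structure Multifunctor {Obj : Type u} {Obj' : Type u} {k : ℕ∞}
    (M : Multicat.{u, v} Obj k) (N : Multicat.{u, v} Obj' k) where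
  fobj : Obj → Obj'
  fmul : ∀ {l : List Obj} {h : ((l.length : ℕ∞)) ≤ k} {c : Obj}
      (h' : (((l.map fobj).length : ℕ∞)) ≤ k), M.Mul l h c → N.Mul (l.map fobj) h' (fobj c)
  fmul_id : ∀ (a : Obj) (h) (h'), fmul h' (M.ident a h) = N.ident (fobj a) h'
  fmul_subst : ∀ {l₁ l₂ : List Obj} {b c : Obj} {m : List Obj}
      (h : (((l₁ ++ b :: l₂ : List Obj).length : ℕ∞)) ≤ k)
      (hm : ((m.length : ℕ∞)) ≤ k)
      (h' : (((l₁ ++ (m ++ l₂) : List Obj).length : ℕ∞)) ≤ k)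
      (g : M.Mul (l₁ ++ b :: l₂) h c) (f : M.Mul m hm b)
      (H : ((((l₁ ++ b :: l₂).map fobj : List Obj').length : ℕ∞)) ≤ k)
      (H1 : (((l₁.map fobj ++ fobj b :: l₂.map fobj : List Obj').length : ℕ∞)) ≤ k)
      (Hm : (((m.map fobj : List Obj').length : ℕ∞)) ≤ k)
      (H2 : (((l₁.map fobj ++ (m.map fobj ++ l₂.map fobj) : List Obj').length : ℕ∞)) ≤ k)
      (H' : ((((l₁ ++ (m ++ l₂)).map fobj : List Obj').length : ℕ∞)) ≤ k),
      HEq (fmul H' (M.subst h hm h' g f))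
        (N.subst (l₁ := l₁.map fobj) (l₂ := l₂.map fobj) H1 Hm H2
          (listCast N.Mul (by simp) (fmul H g)) (fmul Hm f))

/-- A multifunctor is 0-fully faithful when it is bijective on nullary multimaps. -/
def Multifunctor.IsFF0 {Obj Obj' : Type u} {k : ℕ∞} {M : Multicat.{u, v} Obj k}
    {N : Multicat.{u, v} Obj' k} (F : Multifunctor M N) : Prop :=
  ∀ (c : Obj) (h0 : ((((([] : List Obj)).length : ℕ∞))) ≤ k)
    (h0' : (((([] : List Obj')).length : ℕ∞)) ≤ k),
    Function.Bijective (fun f : M.Mul [] h0 c => (F.fmul (l := []) h0' f : N.Mul [] h0' (F.fobj c)))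

/-- A plain `k`-ary multicategory regarded as a `k`-ary skew multicategory in which every
multimap (of arity ≥ 1) is tight. -/
def Multicat.toSkew {Obj : Type u} {k : ℕ∞} (D : Multicat.{u, v} Obj k) :
    SkewMulticat.{u, v} Obj k where
  toMulticat := D
  Tight _ := True
  tight_id _ _ := trivial
  tight_subst_fst _ _ _ _ _ _ _ := trivial
  tight_subst_rest _ _ _ _ _ _ _ := trivial

/-- A multifunctor into the loose part of a skew multicategory sends all multimaps of
positive arity to tight multimaps (i.e. is a skew multifunctor out of `I(D)`). -/
def Multifunctor.PreservesTight {Obj Obj' : Type u} {k : ℕ∞} {D : Multicat.{u, v} Obj k}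
    {C : SkewMulticat.{u, v} Obj' k} (F : Multifunctor D C.toMulticat) : Prop :=
  ∀ {l : List Obj} {h : ((l.length : ℕ∞)) ≤ k} {c : Obj} (h') (f : D.Mul l h c),
    l ≠ [] → C.Tight (F.fmul h' f)
/-! ## The category of tight unary maps, and left representability data -/

/-- The category `C^t₁` of objects and tight unary maps of a `k`-ary skew multicategory
(`k ≥ 1`). -/
structure TOne {Obj : Type u} {k : ℕ∞} (M : SkewMulticat.{u, v} Obj k)
    (hk : (((1 : ℕ) : ℕ∞)) ≤ k) : Type u where
  obj : Obj

instance {Obj : Type u} {k : ℕ∞} (M : SkewMulticat.{u, v} Obj k)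
    (hk : (((1 : ℕ) : ℕ∞)) ≤ k) : Category (TOne M hk) where
  Hom a b := {f : M.Mul [a.obj] hk b.obj // M.Tight f}
  id a := ⟨M.ident a.obj hk, M.tight_id a.obj hk⟩
  comp {a b c} f g :=
    ⟨M.subst (l₁ := []) (l₂ := []) (m := [a.obj]) hk hk hk g.1 f.1,
      M.tight_subst_fst (l₂ := []) (b := b.obj) (m := [a.obj]) hk hk hk g.1 f.1 g.2 f.2⟩
  id_comp {a b} f := by
    apply Subtype.ext
    exact M.subst_id_right (l₁ := []) (l₂ := []) hk hk hk f.1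
  comp_id {a b} f := by
    apply Subtype.ext
    exact eq_of_heq (M.subst_id_left (m := [a.obj]) hk hk hk f.1)
  assoc {a b c d} f g h := by
    apply Subtype.ext
    exact eq_of_heq
      (M.subst_assoc (l₁ := []) (l₂ := []) (m₁ := []) (m₂ := []) (p := [a.obj])
        hk hk hk hk hk hk hk hk h.1 g.1 f.1)

/-- Data exhibiting a `k`-ary skew multicategory (`k ≥ 2`) as left representable: a left
universal nullary map classifier `u : () → unitO` and left universal tight binary map
classifiers `θ a b : a, b → tens a b`. -/
structure LeftRepData {Obj : Type u} {k : ℕ∞} (M : SkewMulticat.{u, v} Obj k)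
    (hk : (((1 : ℕ) : ℕ∞)) ≤ k) (hk2 : (((2 : ℕ) : ℕ∞)) ≤ k)
    (h0 : (((0 : ℕ) : ℕ∞)) ≤ k) where
  unitO : Obj
  u : M.Mul [] h0 unitO
  uBij : ∀ (l : List Obj) (c : Obj) (hl : ((l.length : ℕ∞)) ≤ k)
      (hl' : (((unitO :: l : List Obj).length : ℕ∞)) ≤ k),
      Function.Bijective
        (fun f : {g : M.Mul (unitO :: l) hl' c // M.Tight g} =>
          (M.subst (l₁ := []) (l₂ := l) (m := []) hl' h0 hl f.1 u : M.Mul l hl c))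
  tens : Obj → Obj → Obj
  θ : ∀ a b : Obj, M.Mul [a, b] hk2 (tens a b)
  θT : ∀ a b : Obj, M.Tight (θ a b)
  θBij : ∀ (a b : Obj) (l : List Obj) (c : Obj)
      (hA : (((tens a b :: l : List Obj).length : ℕ∞)) ≤ k)
      (hB : (((a :: b :: l : List Obj).length : ℕ∞)) ≤ k),
      Function.Bijective
        (fun f : {g : M.Mul (tens a b :: l) hA c // M.Tight g} =>
          (⟨M.subst (l₁ := []) (l₂ := l) (m := [a, b]) hA hk2 hB f.1 (θ a b),
              M.tight_subst_fst (l₂ := l) (b := tens a b) (m := [a, b]) hA hk2 hB f.1 (θ a b) f.2 (θT a b)⟩ :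
            {g : M.Mul (a :: b :: l) hB c // M.Tight g}))

namespace LeftRepData

variable {Obj : Type u} {k : ℕ∞} {M : SkewMulticat.{u, v} Obj k}
  {hk : (((1 : ℕ) : ℕ∞)) ≤ k} {hk2 : (((2 : ℕ) : ℕ∞)) ≤ k} {h0 : (((0 : ℕ) : ℕ∞)) ≤ k}
  (LR : LeftRepData M hk hk2 h0)

/-- The map `x̄ ⊗ 1_b : i ⊗ b ⟶ a ⊗ b` in `C^t₁` associated to a tight unary map
`x̄ : i → a`, defined by classifying the tight binary map `θ_{a,b} ∘₁ x̄`. -/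
noncomputable def tensL {a b : Obj}
    (x : (⟨LR.unitO⟩ : TOne M hk) ⟶ (⟨a⟩ : TOne M hk)) :
    (⟨LR.tens LR.unitO b⟩ : TOne M hk) ⟶ (⟨LR.tens a b⟩ : TOne M hk) :=
  (Equiv.ofBijective _ (LR.θBij LR.unitO b [] (LR.tens a b) hk hk2)).symm
    ⟨M.subst (l₁ := []) (l₂ := [b]) (m := [LR.unitO]) hk2 hk hk2 (LR.θ a b) x.1,
      M.tight_subst_fst (l₂ := [b]) (b := a) (m := [LR.unitO]) hk2 hk hk2 (LR.θ a b) x.1 (LR.θT a b) x.2⟩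

/-- The left unit map `l_b : i ⊗ b ⟶ b` in `C^t₁`: the unique tight map classifying the
loose unary identity of `b` through `θ_{i,b}` and the nullary classifier `u`. -/
noncomputable def lunit (b : Obj) :
    (⟨LR.tens LR.unitO b⟩ : TOne M hk) ⟶ (⟨b⟩ : TOne M hk) :=
  ((Equiv.ofBijective _ (LR.θBij LR.unitO b [] b hk hk2)).trans
      (Equiv.ofBijective _ (LR.uBij [b] b hk hk2))).symm (M.ident b hk)

section Colimits

open CategoryTheory.Limits

variable [HasColimits (TOne M hk)] (a b : Obj)

/-- The canonical comparison map `ε : C^t₁(i,a) · (i ⊗ b) ⟶ a ⊗ b`, whose component at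
`x̄ : i → a` is `x̄ ⊗ 1_b`. -/
noncomputable def epsMap :
    (∐ fun _ : ((⟨LR.unitO⟩ : TOne M hk) ⟶ (⟨a⟩ : TOne M hk)) =>
        (⟨LR.tens LR.unitO b⟩ : TOne M hk)) ⟶ (⟨LR.tens a b⟩ : TOne M hk) :=
  Sigma.desc fun x => LR.tensL x

/-- The copower `C^t₁(i,a) · l_b : C^t₁(i,a) · (i ⊗ b) ⟶ C^t₁(i,a) · b`. -/
noncomputable def copowerLunit :
    (∐ fun _ : ((⟨LR.unitO⟩ : TOne M hk) ⟶ (⟨a⟩ : TOne M hk)) =>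
        (⟨LR.tens LR.unitO b⟩ : TOne M hk)) ⟶
      (∐ fun _ : ((⟨LR.unitO⟩ : TOne M hk) ⟶ (⟨a⟩ : TOne M hk)) =>
        (⟨b⟩ : TOne M hk)) :=
  Limits.Sigma.map fun _ => LR.lunit b

/-- The pushout `a ⋆ b` of `ε` along the copower of the left unit map. -/
noncomputable def sharpTensor : TOne M hk :=
  pushout (LR.epsMap a b) (LR.copowerLunit a b)

end Colimits

end LeftRepData

/-!
A sharp binary map `g : a, b → c` is a tight map such that `g ∘₁ x` is tight for every nullary
`x : () → a` (substitutions into the second variable are tight anyway), and every such `x` is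
`ξ ∘ u` for a tight `ξ : i → a`. So `g` yields a tight `ḡ : a ⊗ b → c` with `ḡ ∘ θ = g` and
tight maps `s_ξ = g ∘₁ (ξ ∘ u) : b → c`. For tight `t : a ⊗ b → c` and `s : b → c`, the
universal properties of `θ_{i,b}` and `u` show that `(ξ ⊗ 1) ≫ t = l_b ≫ s` holds exactly when
`(t ∘ θ) ∘₁ (ξ ∘ u) = s`. Hence the pairs `(ḡ, (s_ξ)_ξ)` are precisely the cocones on the span
`a ⊗ b ← C^t₁(i,a)·(i ⊗ b) → C^t₁(i,a)·b`, and sharp maps `a, b → c` correspond to tight maps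
out of its pushout `a ⋆ b`, by precomposition with `θ♯ = inl ∘ θ`. Unary sharp maps are just
the tight ones, which gives the nullary part.
-/

section

variable {Obj : Type u} {k : ℕ∞} {M : SkewMulticat.{u, v} Obj k}
  {hk : (((1 : ℕ) : ℕ∞)) ≤ k} {hk2 : (((2 : ℕ) : ℕ∞)) ≤ k} {h0 : (((0 : ℕ) : ℕ∞)) ≤ k}

/- Substitution into the first variable; the arity bounds are picked among `hk`, `hk2`, `h0`. -/
local notation:70 g:71 " ∘₁ " f:70 =>
  Multicat.subst _ (l₁ := []) (by assumption) (by assumption) (by assumption) g f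

local notation "𝐓" => TOne M hk

namespace Multicat

variable {C : Multicat.{u, v} Obj k}

theorem assoc_unary_unary_binary {a b p q c : Obj} (t : C.Mul [q] hk c) (s : C.Mul [p] hk q)
    (g : C.Mul [a, b] hk2 p) : t ∘₁ (s ∘₁ g) = (t ∘₁ s) ∘₁ g :=
  eq_of_heq (C.subst_assoc (l₁ := []) (l₂ := []) (m₁ := []) (m₂ := []) (p := [a, b])
    hk hk hk2 hk2 hk2 hk hk hk2 t s g)

theorem assoc_unary_binary_unary {w a b q c : Obj} (t : C.Mul [q] hk c)
    (g : C.Mul [a, b] hk2 q) (s : C.Mul [w] hk a) : t ∘₁ (g ∘₁ s) = (t ∘₁ g) ∘₁ s :=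
  eq_of_heq (C.subst_assoc (l₁ := []) (l₂ := []) (m₁ := []) (m₂ := [b]) (p := [w])
    hk hk2 hk hk2 hk2 hk2 hk2 hk2 t g s)

theorem assoc_unary_binary_nullary {a b q c : Obj} (t : C.Mul [q] hk c)
    (g : C.Mul [a, b] hk2 q) (x : C.Mul [] h0 a) : t ∘₁ (g ∘₁ x) = (t ∘₁ g) ∘₁ x :=
  eq_of_heq (C.subst_assoc (l₁ := []) (l₂ := []) (m₁ := []) (m₂ := [b]) (p := [])
    hk hk2 h0 hk hk hk2 hk2 hk t g x)

theorem assoc_binary_unary_nullary {w a b c : Obj} (g : C.Mul [a, b] hk2 c)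
    (s : C.Mul [w] hk a) (x : C.Mul [] h0 w) : g ∘₁ (s ∘₁ x) = (g ∘₁ s) ∘₁ x :=
  eq_of_heq (C.subst_assoc (l₁ := []) (l₂ := [b]) (m₁ := []) (m₂ := []) (p := [])
    hk2 hk h0 h0 hk hk2 hk2 hk g s x)

end Multicat

namespace SkewMulticat

open Multicat

theorem sharp_unary_iff_tight {a c : Obj} (f : M.Mul [a] hk c) : M.Sharp f ↔ M.Tight f :=
  ⟨And.left, fun hf => ⟨hf, fun _ _ _ _ _ _ _ => trivial⟩⟩

def sharpEquivTight (a c : Obj) :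
    {f : M.Mul [a] hk c // M.Sharp f} ≃ {f : M.Mul [a] hk c // M.Tight f} :=
  Equiv.subtypeEquivRight sharp_unary_iff_tight

theorem sharp_binary_iff {a b c : Obj} (g : M.Mul [a, b] hk2 c) :
    M.Sharp g ↔ M.Tight g ∧ ∀ x : M.Mul [] h0 a, M.Tight (g ∘₁ x) := by
  refine ⟨fun hg => ⟨hg.1, fun x => (hg.2 [] [b] a rfl h0 x hk).1⟩, fun ⟨hg, hgx⟩ => ⟨hg, ?_⟩⟩
  intro l₁ l₂ a' e _ x _
  refine ⟨?_, fun _ _ _ _ _ _ _ => trivial⟩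
  rcases l₁ with _ | ⟨w, _ | ⟨w', l₁⟩⟩
  · obtain ⟨rfl, rfl⟩ : a = a' ∧ [b] = l₂ := by simpa using e
    exact hgx x
  · obtain ⟨rfl, rfl, rfl⟩ : a = w ∧ b = a' ∧ [] = l₂ := by simpa using e
    exact M.tight_subst_rest (l₁ := [a]) (l₂ := []) (b := b) (m := []) hk2 h0 hk g x
      (List.cons_ne_nil _ _) hg
  · simpa using congrArg List.length e

theorem sharp_comp_of_tight {a b q c : Obj} {t : M.Mul [q] hk c} {g : M.Mul [a, b] hk2 q}
    (ht : M.Tight t) (hg : M.Sharp g) : M.Sharp (t ∘₁ g) := by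
  rw [sharp_binary_iff (h0 := by simp)] at hg ⊢
  refine ⟨M.tight_subst_fst _ _ _ t g ht hg.1, fun x => ?_⟩
  rw [← assoc_unary_binary_nullary]
  exact M.tight_subst_fst _ _ _ t _ ht (hg.2 x)

end SkewMulticat

namespace LeftRepData

open Multicat CategoryTheory.Limits

variable (LR : LeftRepData M hk hk2 h0)

theorem exists_tight_comp_u {a : Obj} (x : M.Mul [] h0 a) :
    ∃ ξ : (⟨LR.unitO⟩ : 𝐓) ⟶ ⟨a⟩, ξ.1 ∘₁ LR.u = x :=
  (LR.uBij [] a h0 hk).surjective x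

theorem tens_hom_ext {a b c : Obj} {t t' : (⟨LR.tens a b⟩ : 𝐓) ⟶ ⟨c⟩}
    (h : t.1 ∘₁ LR.θ a b = t'.1 ∘₁ LR.θ a b) : t = t' :=
  (LR.θBij a b [] c hk hk2).injective (Subtype.ext h)

theorem unit_tens_hom_ext {b c : Obj} {t t' : (⟨LR.tens LR.unitO b⟩ : 𝐓) ⟶ ⟨c⟩}
    (h : (t.1 ∘₁ LR.θ LR.unitO b) ∘₁ LR.u = (t'.1 ∘₁ LR.θ LR.unitO b) ∘₁ LR.u) : t = t' :=
  (LR.θBij LR.unitO b [] c hk hk2).injective ((LR.uBij [b] c hk hk2).injective h)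

def tensDesc {a b c : Obj} (g : M.Mul [a, b] hk2 c) (hg : M.Tight g) :
    (⟨LR.tens a b⟩ : 𝐓) ⟶ ⟨c⟩ :=
  (Equiv.ofBijective _ (LR.θBij a b [] c hk hk2)).symm ⟨g, hg⟩

theorem tensDesc_comp_θ {a b c : Obj} (g : M.Mul [a, b] hk2 c) (hg : M.Tight g) :
    (LR.tensDesc g hg).1 ∘₁ LR.θ a b = g :=
  congrArg Subtype.val ((Equiv.ofBijective _ (LR.θBij a b [] c hk hk2)).apply_symm_apply _)

theorem tensL_comp_θ {a b : Obj} (ξ : (⟨LR.unitO⟩ : 𝐓) ⟶ ⟨a⟩) :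
    (LR.tensL (b := b) ξ).1 ∘₁ LR.θ LR.unitO b = LR.θ a b ∘₁ ξ.1 :=
  congrArg Subtype.val
    ((Equiv.ofBijective _ (LR.θBij LR.unitO b [] (LR.tens a b) hk hk2)).apply_symm_apply _)

theorem lunit_comp_θ_comp_u (b : Obj) :
    ((LR.lunit b).1 ∘₁ LR.θ LR.unitO b) ∘₁ LR.u = M.ident b hk :=
  ((Equiv.ofBijective _ (LR.θBij LR.unitO b [] b hk hk2)).trans
    (Equiv.ofBijective _ (LR.uBij [b] b hk hk2))).apply_symm_apply (M.ident b hk)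

theorem tensL_comp_θ_comp_u {a b c : Obj} (ξ : (⟨LR.unitO⟩ : 𝐓) ⟶ ⟨a⟩)
    (t : (⟨LR.tens a b⟩ : 𝐓) ⟶ ⟨c⟩) :
    ((LR.tensL ξ ≫ t).1 ∘₁ LR.θ LR.unitO b) ∘₁ LR.u = (t.1 ∘₁ LR.θ a b) ∘₁ (ξ.1 ∘₁ LR.u) := by
  change ((t.1 ∘₁ (LR.tensL ξ).1) ∘₁ LR.θ LR.unitO b) ∘₁ LR.u = _
  rw [← assoc_unary_unary_binary, tensL_comp_θ, assoc_unary_binary_unary,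
    assoc_binary_unary_nullary]

theorem lunit_comp_θ_comp_u_assoc {b c : Obj} (s : (⟨b⟩ : 𝐓) ⟶ ⟨c⟩) :
    ((LR.lunit b ≫ s).1 ∘₁ LR.θ LR.unitO b) ∘₁ LR.u = s.1 := by
  change ((s.1 ∘₁ (LR.lunit b).1) ∘₁ LR.θ LR.unitO b) ∘₁ LR.u = _
  rw [← assoc_unary_unary_binary, ← assoc_unary_binary_nullary, lunit_comp_θ_comp_u]
  exact M.subst_id_right (l₁ := []) (l₂ := []) hk hk hk s.1

theorem tensL_comp_eq_lunit_comp_iff {a b c : Obj} (ξ : (⟨LR.unitO⟩ : 𝐓) ⟶ ⟨a⟩)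
    (t : (⟨LR.tens a b⟩ : 𝐓) ⟶ ⟨c⟩) (s : (⟨b⟩ : 𝐓) ⟶ ⟨c⟩) :
    LR.tensL ξ ≫ t = LR.lunit b ≫ s ↔ (t.1 ∘₁ LR.θ a b) ∘₁ (ξ.1 ∘₁ LR.u) = s.1 := by
  rw [← LR.tensL_comp_θ_comp_u, ← LR.lunit_comp_θ_comp_u_assoc s]
  exact ⟨fun h => by rw [h], LR.unit_tens_hom_ext⟩

section Pushout

variable [HasColimits (TOne M hk)] (a b : Obj)

def sharpInl : (⟨LR.tens a b⟩ : 𝐓) ⟶ LR.sharpTensor a b :=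
  pushout.inl (LR.epsMap a b) (LR.copowerLunit a b)

def sharpInr (ξ : (⟨LR.unitO⟩ : 𝐓) ⟶ ⟨a⟩) : (⟨b⟩ : 𝐓) ⟶ LR.sharpTensor a b :=
  Sigma.ι (fun _ => (⟨b⟩ : 𝐓)) ξ ≫ pushout.inr (LR.epsMap a b) (LR.copowerLunit a b)

theorem tensL_comp_sharpInl (ξ : (⟨LR.unitO⟩ : 𝐓) ⟶ ⟨a⟩) :
    LR.tensL ξ ≫ LR.sharpInl a b = LR.lunit b ≫ LR.sharpInr a b ξ := by
  have h := Sigma.ι (fun _ => (⟨LR.tens LR.unitO b⟩ : 𝐓)) ξ ≫=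
    pushout.condition (f := LR.epsMap a b) (g := LR.copowerLunit a b)
  simp only [epsMap, copowerLunit, Sigma.ι_desc_assoc, Sigma.ι_map_assoc] at h
  exact h

theorem epsMap_comp_eq_copowerLunit_comp {c : Obj} (t : (⟨LR.tens a b⟩ : 𝐓) ⟶ ⟨c⟩)
    (s : ((⟨LR.unitO⟩ : 𝐓) ⟶ ⟨a⟩) → ((⟨b⟩ : 𝐓) ⟶ ⟨c⟩))
    (h : ∀ ξ, LR.tensL ξ ≫ t = LR.lunit b ≫ s ξ) :
    LR.epsMap a b ≫ t = LR.copowerLunit a b ≫ Sigma.desc s :=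
  Sigma.hom_ext _ _ fun ξ => by simpa [epsMap, copowerLunit] using h ξ

def sharpθ : M.Mul [a, b] hk2 (LR.sharpTensor a b).obj :=
  (LR.sharpInl a b).1 ∘₁ LR.θ a b

theorem sharpθ_comp_u (ξ : (⟨LR.unitO⟩ : 𝐓) ⟶ ⟨a⟩) :
    LR.sharpθ a b ∘₁ (ξ.1 ∘₁ LR.u) = (LR.sharpInr a b ξ).1 :=
  (LR.tensL_comp_eq_lunit_comp_iff ξ _ _).1 (LR.tensL_comp_sharpInl a b ξ)

theorem comp_sharpθ {c : Obj} (F : LR.sharpTensor a b ⟶ ⟨c⟩) :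
    F.1 ∘₁ LR.sharpθ a b = (LR.sharpInl a b ≫ F).1 ∘₁ LR.θ a b :=
  assoc_unary_unary_binary _ _ _

theorem sharp_sharpθ : M.Sharp (LR.sharpθ a b) := by
  refine (SkewMulticat.sharp_binary_iff (hk := hk) (h0 := h0) _).2
    ⟨M.tight_subst_fst (l₂ := []) (m := [a, b]) hk hk2 hk2 _ _ (LR.sharpInl a b).2 (LR.θT a b),
      fun x => ?_⟩
  obtain ⟨ξ, rfl⟩ := LR.exists_tight_comp_u x
  rw [sharpθ_comp_u]
  exact (LR.sharpInr a b ξ).2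

theorem comp_sharpθ_injective (c : Obj) :
    Function.Injective fun F : LR.sharpTensor a b ⟶ ⟨c⟩ => F.1 ∘₁ LR.sharpθ a b := by
  intro F F' (h : F.1 ∘₁ LR.sharpθ a b = F'.1 ∘₁ LR.sharpθ a b)
  refine pushout.hom_ext (LR.tens_hom_ext ?_) (Sigma.hom_ext _ _ fun ξ => ?_)
  · rwa [comp_sharpθ, comp_sharpθ] at h
  · have h' : LR.sharpInr a b ξ ≫ F = LR.sharpInr a b ξ ≫ F' := by
      apply Subtype.ext
      change F.1 ∘₁ (LR.sharpInr a b ξ).1 = F'.1 ∘₁ (LR.sharpInr a b ξ).1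
      simp only [← sharpθ_comp_u, assoc_unary_binary_nullary]
      exact congrArg (· ∘₁ (ξ.1 ∘₁ LR.u)) h
    exact (Category.assoc _ _ _).symm.trans (h'.trans (Category.assoc _ _ _))

theorem exists_comp_sharpθ_eq {c : Obj} (g : M.Mul [a, b] hk2 c) (hg : M.Sharp g) :
    ∃ F : LR.sharpTensor a b ⟶ ⟨c⟩, F.1 ∘₁ LR.sharpθ a b = g := by
  obtain ⟨hg, hgx⟩ := (SkewMulticat.sharp_binary_iff (hk := hk) (h0 := h0) g).1 hg
  let s : ((⟨LR.unitO⟩ : 𝐓) ⟶ ⟨a⟩) → ((⟨b⟩ : 𝐓) ⟶ ⟨c⟩) := fun ξ =>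
    ⟨g ∘₁ (ξ.1 ∘₁ LR.u), hgx _⟩
  have hcocone := LR.epsMap_comp_eq_copowerLunit_comp a b (LR.tensDesc g hg) s fun ξ =>
    (LR.tensL_comp_eq_lunit_comp_iff ξ _ _).2 (by rw [tensDesc_comp_θ])
  let F : LR.sharpTensor a b ⟶ ⟨c⟩ := pushout.desc _ _ hcocone
  have hF : LR.sharpInl a b ≫ F = LR.tensDesc g hg := pushout.inl_desc _ _ hcocone
  exact ⟨F, by rw [comp_sharpθ, hF, tensDesc_comp_θ]⟩

end Pushout

end LeftRepData

end

open CategoryTheory.Limits in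
/-- **Theorem.** Let `k ≥ 2` and let `C` be a left representable `k`-ary skew
multicategory whose category `C^t₁` of objects and tight unary maps is cocomplete.  Then
the `k`-ary multicategory `C^♯` of sharp multimaps admits nullary and binary map
classifiers: the nullary map classifier `u : () → i` of `C` is also a nullary map
classifier for `C^♯`, and a classifier `a ⋆ b` of sharp binary maps out of `(a,b)` is
given by the pushout in `C^t₁` of the canonical map `ε : C^t₁(i,a)·(i⊗b) → a⊗b` (whose
component at `x̄ : i → a` is `x̄ ⊗ 1`) along the copower `C^t₁(i,a)·l_b` of the left unit
map `l_b : i⊗b → b`. -/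
theorem sharpClassifiersViaPushout {Obj : Type u} {k : ℕ∞}
    (hk : (((1 : ℕ) : ℕ∞)) ≤ k) (hk2 : (((2 : ℕ) : ℕ∞)) ≤ k)
    (h0 : (((0 : ℕ) : ℕ∞)) ≤ k) (M : SkewMulticat.{u, v} Obj k)
    (LR : LeftRepData M hk hk2 h0) [HasColimits (TOne M hk)] :
    (∀ c : Obj,
      Function.Bijective
        (fun f : {f : M.Mul [LR.unitO] hk c // M.Sharp f} =>
          (M.subst (l₁ := []) (l₂ := []) (m := []) hk h0 h0 f.1 LR.u :
            M.Mul [] h0 c))) ∧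
    (∀ a b : Obj,
      ∃ θs : M.Mul [a, b] hk2 ((LR.sharpTensor a b).obj),
        M.Sharp θs ∧
        ∀ c : Obj,
          Function.Injective
            (fun f : {f : M.Mul [(LR.sharpTensor a b).obj] hk c // M.Sharp f} =>
              (M.subst (l₁ := []) (l₂ := []) (m := [a, b]) hk hk2 hk2 f.1 θs :
                M.Mul [a, b] hk2 c)) ∧
          ∀ g : M.Mul [a, b] hk2 c,
            M.Sharp g ↔
              ∃ f : {f : M.Mul [(LR.sharpTensor a b).obj] hk c // M.Sharp f},
                M.subst (l₁ := []) (l₂ := []) (m := [a, b]) hk hk2 hk2 f.1 θs = g) := by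
  refine ⟨fun c => (LR.uBij [] c h0 hk).comp (M.sharpEquivTight _ c).bijective, fun a b =>
    ⟨LR.sharpθ a b, LR.sharp_sharpθ a b, fun c =>
      ⟨(LR.comp_sharpθ_injective a b c).comp (M.sharpEquivTight _ c).injective,
        fun g => ⟨fun hg => ?_, ?_⟩⟩⟩⟩
  · obtain ⟨F, hF⟩ := LR.exists_comp_sharpθ_eq a b g hg
    exact ⟨(M.sharpEquivTight _ c).symm F, hF⟩
  · rintro ⟨f, rfl⟩
    exact M.sharp_comp_of_tight (M.sharpEquivTight _ c f).2 (LR.sharp_sharpθ a b)
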